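/- arXiv:2002.10457 — 5 statements merged into one kernel-verified Lean document; each statement's English description precedes it below -/
import Mathlib

section
/- Suppose that X is a second countable topological space and φ : ℕ^ℕ → X is Baire measurable. Then there is a ∧-embedding π : ℕ^{<ℕ} → ℕ^{<ℕ} such that φ ∘ π̂ : ℕ^ℕ → X is continuous. -/
open Set Topology TopologicalSpace
open scoped ENNReal

/-- `t` is an initial segment of `b : ℕ → ℕ`. -/
def PrefixFun (t : List ℕ) (b : ℕ → ℕ) : Prop :=
  ∀ (i : ℕ) (h : i < t.length), t.get ⟨i, h⟩ = b i

/-- The meet `s ∧ t`: the longest common initial segment of two finite sequences. -/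
def listMeet : List ℕ → List ℕ → List ℕ
  | a :: s, b :: t => if a = b then a :: listMeet s t else []
  | _, _ => []

/-- A `∧`-embedding: an injection preserving meets. -/
def MeetEmbedding (π : List ℕ → List ℕ) : Prop :=
  Function.Injective π ∧ ∀ s t, π (listMeet s t) = listMeet (π s) (π t)

/-- The induced map on Baire space: `limSeq π b = ⋃ i, π (b ↾ i)`. -/
def limSeq (π : List ℕ → List ℕ) (b : ℕ → ℕ) : ℕ → ℕ := fun n =>
  (π (List.ofFn fun i : Fin (n + 1) => b i)).getD n 0

/-- Points of the space `ℕ^{≤ℕ}_*`: finite sequences, infinite sequences, and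
finite sequences followed by `∞`. -/
inductive NStar : Type
  | fin : List ℕ → NStar
  | inf : (ℕ → ℕ) → NStar
  | lim : List ℕ → NStar

namespace NStar

/-- `t ⊑ c`. -/
def PrefixOf (t : List ℕ) : NStar → Prop
  | fin s => t <+: s
  | inf b => PrefixFun t b
  | lim s => t <+: s

/-- The basic "cylinder" `N_t = {c | t ⊑ c}`. -/
def cyl (t : List ℕ) : Set NStar := {c | PrefixOf t c}

/-- The smallest topology in which every `{t}` and every `N_t` is clopen. -/
instance : TopologicalSpace NStar :=
  TopologicalSpace.generateFrom
    {S | ∃ t : List ℕ, S = {fin t} ∨ S = ({fin t} : Set NStar)ᶜ ∨ S = cyl t ∨ S = (cyl t)ᶜ}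

def IsFin (c : NStar) : Prop := ∃ t, c = fin t
def IsInf (c : NStar) : Prop := ∃ b, c = inf b
def IsLim (c : NStar) : Prop := ∃ t, c = lim t

/-- The extension of `π : ℕ^{<ℕ} → ℕ^{<ℕ}` to `ℕ^{≤ℕ}_*`. -/
def hat (π : List ℕ → List ℕ) : NStar → NStar
  | fin t => fin (π t)
  | inf b => inf (limSeq π b)
  | lim t => lim (π t)

end NStar

/-- `ℕ^ℕ_* = ℕ^{≤ℕ}_* ∖ ℕ^{<ℕ}`. -/
abbrev NNStar : Type := {c : NStar // ¬ c.IsFin}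
/-- `ℕ^ℕ_* ∖ ℕ^ℕ = {t⌢⟨∞⟩ : t ∈ ℕ^{<ℕ}}`. -/
abbrev NLim : Type := {c : NStar // c.IsLim}
/-- The copy of `ℕ^{<ℕ}` inside `ℕ^{≤ℕ}_*` (a discrete subspace). -/
abbrev NFin : Type := {c : NStar // c.IsFin}
/-- `ℕ^{≤ℕ} = ℕ^{<ℕ} ∪ ℕ^ℕ`. -/
abbrev NFinInf : Type := {c : NStar // ¬ c.IsLim}
/-- `ℕ^{≤ℕ}_* ∖ ℕ^ℕ`. -/
abbrev NFinLim : Type := {c : NStar // ¬ c.IsInf}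

def infPt (b : ℕ → ℕ) : NNStar :=
  ⟨NStar.inf b, by rintro ⟨t, h⟩; exact NStar.noConfusion h⟩

def limPt (t : List ℕ) : NLim := ⟨NStar.lim t, t, rfl⟩

def finPt (t : List ℕ) : NFin := ⟨NStar.fin t, t, rfl⟩

/-- The extension `π̂` restricted to `ℕ^ℕ_*`. -/
def hatNN (π : List ℕ → List ℕ) (c : NNStar) : NNStar :=
  ⟨c.1.hat π, by
    obtain ⟨c, hc⟩ := c
    cases c with
    | fin t => exact fun _ => hc ⟨t, rfl⟩
    | inf b => rintro ⟨t, h⟩; exact NStar.noConfusion h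
    | lim t => rintro ⟨s, h⟩; exact NStar.noConfusion h⟩

/-- The extension `π̂` restricted to `ℕ^ℕ_* ∖ ℕ^ℕ`. -/
def hatLim (π : List ℕ → List ℕ) (c : NLim) : NLim :=
  ⟨c.1.hat π, by obtain ⟨c, t, rfl⟩ := c; exact ⟨π t, rfl⟩⟩

def NLim.toNN (c : NLim) : NNStar :=
  ⟨c.1, by obtain ⟨c, t, rfl⟩ := c; rintro ⟨s, h⟩; exact NStar.noConfusion h⟩

def NLim.base (c : NLim) : List ℕ :=
  match c.1 with
  | .lim t => t
  | .fin t => t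
  | .inf _ => []

/-- The map `p : t⌢⟨∞⟩ ↦ t`, with values in the discrete copy of `ℕ^{<ℕ}`. -/
def pFin (c : NLim) : NFin := finPt c.base

def NFin.toFinLim (c : NFin) : NFinLim :=
  ⟨c.1, by obtain ⟨c, t, rfl⟩ := c; rintro ⟨b, h⟩; exact NStar.noConfusion h⟩

def NFin.toFinInf (c : NFin) : NFinInf :=
  ⟨c.1, by obtain ⟨c, t, rfl⟩ := c; rintro ⟨s, h⟩; exact NStar.noConfusion h⟩

/-- A closed continuous embedding of `φ` into `φ'`: a pair of injective continuous closed
maps `πX : X → X'` and `πY : cl(φ[X]) → cl(φ'[X'])` with `φ' ∘ πX = πY ∘ φ`. -/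
def ClosedContinuousEmbedding {X Y X' Y' : Type*} [TopologicalSpace X] [TopologicalSpace Y]
    [TopologicalSpace X'] [TopologicalSpace Y'] (φ : X → Y) (φ' : X' → Y') : Prop :=
  ∃ (πX : X → X') (πY : closure (Set.range φ) → closure (Set.range φ')),
    Continuous πX ∧ Function.Injective πX ∧ IsClosedMap πX ∧
    Continuous πY ∧ Function.Injective πY ∧ IsClosedMap πY ∧
    ∀ x : X, φ' (πX x) = (πY ⟨φ x, subset_closure ⟨x, rfl⟩⟩ : Y')

/-- A topological space is analytic if it is a continuous image of a closed subset of `ℕ^ℕ`. -/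
def IsAnalytic (X : Type*) [TopologicalSpace X] : Prop :=
  ∃ C : Set (ℕ → ℕ), IsClosed C ∧ ∃ f : C → X, Continuous f ∧ Function.Surjective f

/-- Baire measurable: preimages of open sets have the Baire property. -/
def BaireMeasurableFun {X Y : Type*} [TopologicalSpace X] [TopologicalSpace Y]
    (φ : X → Y) : Prop :=
  ∀ V : Set Y, IsOpen V → ∃ U : Set X, IsOpen U ∧ IsMeagre (symmDiff (φ ⁻¹' V) U)

/-- Baire class one: preimages of open sets are `Fσ`. -/
def BaireClassOneFun {X Y : Type*} [TopologicalSpace X] [TopologicalSpace Y]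
    (φ : X → Y) : Prop :=
  ∀ V : Set Y, IsOpen V → ∃ F : ℕ → Set X, (∀ n, IsClosed (F n)) ∧ φ ⁻¹' V = ⋃ n, F n

/-- σ-continuous with closed witnesses. -/
def SigmaContClosed {X Y : Type*} [TopologicalSpace X] [TopologicalSpace Y]
    (φ : X → Y) : Prop :=
  ∃ F : ℕ → Set X, (∀ n, IsClosed (F n)) ∧ (⋃ n, F n) = Set.univ ∧ ∀ n, ContinuousOn φ (F n)

/-- Borel: preimages of open sets are Borel. -/
def BorelFun {X Y : Type*} [TopologicalSpace X] [TopologicalSpace Y] (φ : X → Y) : Prop :=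
  ∀ V : Set Y, IsOpen V → @MeasurableSet X (borel X) (φ ⁻¹' V)

/-- The function on `ℕ^ℕ_*` agreeing with `f` on `ℕ^ℕ` and with `g` on `ℕ^ℕ_* ∖ ℕ^ℕ`,
with values in the topological disjoint union. -/
def combine2 {A B : Type*} (f : (ℕ → ℕ) → A) (g : NLim → B) : NNStar → A ⊕ B := fun c =>
  match c with
  | ⟨.fin t, h⟩ => absurd ⟨t, rfl⟩ h
  | ⟨.inf b, _⟩ => Sum.inl (f b)
  | ⟨.lim t, _⟩ => Sum.inr (g (limPt t))


section Stmt9Aux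

/-! ### Auxiliary lemmas about `listMeet` -/

lemma listMeet_self (s : List ℕ) : listMeet s s = s := by
  induction s with
  | nil => rfl
  | cons a s ih => simp [listMeet, ih]

lemma listMeet_of_prefix : ∀ {s t : List ℕ}, s <+: t → listMeet s t = s := by
  intro s
  induction s with
  | nil => intro t _; cases t <;> rfl
  | cons a s ih =>
    rintro t ⟨r, rfl⟩
    simp only [List.cons_append, listMeet, if_pos rfl, if_true]
    simp [ih ⟨r, rfl⟩]

lemma listMeet_of_prefix' : ∀ {s t : List ℕ}, t <+: s → listMeet s t = t := by
  intro s
  induction s with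
  | nil => intro t h; rw [List.prefix_nil.mp h]; rfl
  | cons a s ih =>
    intro t h
    cases t with
    | nil => rfl
    | cons b t =>
      obtain ⟨hab, h'⟩ := List.cons_prefix_cons.mp h
      subst hab
      simp only [listMeet, if_pos rfl, if_true]
      simp [ih h']

lemma listMeet_append (u x y : List ℕ) :
    listMeet (u ++ x) (u ++ y) = u ++ listMeet x y := by
  induction u with
  | nil => rfl
  | cons a u ih => simp [listMeet, ih]

lemma listMeet_cons_ne {a b : ℕ} {x y : List ℕ} (h : a ≠ b) :
    listMeet (a :: x) (b :: y) = [] := by simp [listMeet, h]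

lemma meet_cases (s t : List ℕ) : s <+: t ∨ t <+: s ∨
    ∃ a b s₁ t₁, a ≠ b ∧ s = listMeet s t ++ a :: s₁ ∧ t = listMeet s t ++ b :: t₁ := by
  induction s generalizing t with
  | nil => exact Or.inl (List.nil_prefix)
  | cons a s ih =>
    cases t with
    | nil => exact Or.inr (Or.inl (List.nil_prefix))
    | cons b t =>
      by_cases hab : a = b
      · subst hab
        rcases ih t with h | h | ⟨c, d, s₁, t₁, hcd, hs, ht⟩
        · exact Or.inl (List.cons_prefix_cons.mpr ⟨rfl, h⟩)
        · exact Or.inr (Or.inl (List.cons_prefix_cons.mpr ⟨rfl, h⟩))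
        · refine Or.inr (Or.inr ⟨c, d, s₁, t₁, hcd, ?_, ?_⟩) <;>
            simp only [listMeet, if_pos rfl, List.cons_append] <;>
            [exact congrArg (a :: ·) hs; exact congrArg (a :: ·) ht]
      · exact Or.inr (Or.inr ⟨a, b, s, t, hab,
          by rw [listMeet_cons_ne hab]; rfl, by rw [listMeet_cons_ne hab]; rfl⟩)

/-! ### Cylinders in Baire space -/

/-- The basic cylinder in `ℕ → ℕ` determined by a finite sequence. -/
def cylSet (l : List ℕ) : Set (ℕ → ℕ) := {b | ∀ i < l.length, b i = l.getD i 0}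

lemma isOpen_cylSet (l : List ℕ) : IsOpen (cylSet l) := by
  have h : cylSet l = ⋂ i ∈ Finset.range l.length,
      (fun b : ℕ → ℕ => b i) ⁻¹' {l.getD i 0} := by
    ext b; simp [cylSet]
  rw [h]
  exact isOpen_biInter_finset fun i _ =>
    (continuous_apply i).isOpen_preimage _ (isOpen_discrete _)

lemma getD_of_prefix {x y : List ℕ} (h : x <+: y) {n : ℕ} (hn : n < x.length) :
    y.getD n 0 = x.getD n 0 := by
  rw [List.getD_eq_getElem _ _ hn, List.getD_eq_getElem _ _ (hn.trans_le h.length_le)]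
  exact (h.getElem hn).symm

lemma exists_ext {U : Set (ℕ → ℕ)} (hU : IsOpen U) (hd : Dense U) (u : List ℕ) :
    ∃ v : List ℕ, u <+: v ∧ cylSet v ⊆ U := by
  have hne : (cylSet u).Nonempty := ⟨fun i => u.getD i 0, fun i _ => rfl⟩
  obtain ⟨y, hyU, hyc⟩ := hd.exists_mem_open (isOpen_cylSet u) hne
  obtain ⟨I, w, hw, hsub⟩ := isOpen_pi_iff.mp hU y hyU
  set n := max (I.sup id + 1) u.length with hn
  refine ⟨List.ofFn (fun i : Fin n => y i), ?_, ?_⟩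
  · rw [List.prefix_iff_eq_take]
    apply List.ext_getElem
    · have hun : u.length ≤ n := le_max_right _ _
      simp [List.length_take, min_eq_left hun]
    · intro i hi hi'
      have hiu : i < u.length := hi
      have hin : i < n := lt_of_lt_of_le hiu (le_max_right _ _)
      rw [List.getElem_take]
      rw [List.getElem_ofFn]
      have := hyc i hiu
      simp only [List.getD_eq_getElem _ _ hiu] at this
      exact this.symm
  · intro z hz
    apply hsub
    intro i hiI
    have hin : i < n := lt_of_lt_of_le (Nat.lt_succ_of_le (Finset.le_sup (f := id) hiI))
      (le_max_left _ _)
    have hlen : i < (List.ofFn (fun i : Fin n => y i)).length := by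
      simpa using hin
    have := hz i hlen
    rw [List.getD_eq_getElem _ _ hlen, List.getElem_ofFn] at this
    rw [this]
    exact (hw i hiI).2

/-! ### The recursive construction -/

open Classical in
/-- Extend `u` to a sequence whose cylinder is contained in `G k`, if possible. -/
noncomputable def extFn (G : ℕ → Set (ℕ → ℕ)) (u : List ℕ) (k : ℕ) : List ℕ :=
  if h : ∃ v, u <+: v ∧ cylSet v ⊆ G k then h.choose else u

lemma extFn_prefix (G : ℕ → Set (ℕ → ℕ)) (u : List ℕ) (k : ℕ) : u <+: extFn G u k := by
  classical
  rw [extFn]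
  split
  · next h => exact h.choose_spec.1
  · exact List.prefix_rfl

lemma extFn_spec {G : ℕ → Set (ℕ → ℕ)} {k : ℕ} (hO : IsOpen (G k)) (hD : Dense (G k))
    (u : List ℕ) : cylSet (extFn G u k) ⊆ G k := by
  classical
  rw [extFn, dif_pos (exists_ext hO hD u)]
  exact (exists_ext hO hD u).choose_spec.2

noncomputable def buildRev (G : ℕ → Set (ℕ → ℕ)) : List ℕ → List ℕ
  | [] => []
  | n :: r => extFn G (buildRev G r ++ [n]) r.length

/-- The `∧`-embedding associated to a family of open dense sets. -/
noncomputable def build (G : ℕ → Set (ℕ → ℕ)) (t : List ℕ) : List ℕ :=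
  buildRev G t.reverse

lemma build_append (G : ℕ → Set (ℕ → ℕ)) (t : List ℕ) (n : ℕ) :
    build G (t ++ [n]) = extFn G (build G t ++ [n]) t.length := by
  rw [build, List.reverse_append]
  simp [buildRev, build]

lemma build_cons_prefix (G : ℕ → Set (ℕ → ℕ)) (t : List ℕ) (n : ℕ) :
    build G t ++ [n] <+: build G (t ++ [n]) := by
  rw [build_append]; exact extFn_prefix _ _ _

lemma build_prefix (G : ℕ → Set (ℕ → ℕ)) (t r : List ℕ) :
    build G t <+: build G (t ++ r) := by
  induction r using List.reverseRecOn with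
  | nil => simp
  | append_singleton r n ih =>
    rw [← List.append_assoc]
    exact ih.trans ((List.prefix_append _ _).trans (build_cons_prefix G (t ++ r) n))

lemma build_mono (G : ℕ → Set (ℕ → ℕ)) {s t : List ℕ} (h : s <+: t) :
    build G s <+: build G t := by
  obtain ⟨r, rfl⟩ := h; exact build_prefix G s r

lemma build_length_append (G : ℕ → Set (ℕ → ℕ)) (t r : List ℕ) :
    (build G t).length + r.length ≤ (build G (t ++ r)).length := by
  induction r using List.reverseRecOn with
  | nil => simp
  | append_singleton r n ih =>
    have h1 : (build G (t ++ r) ++ [n]).length ≤ (build G ((t ++ r) ++ [n])).length :=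
      (build_cons_prefix G (t ++ r) n).length_le
    rw [← List.append_assoc]
    simp only [List.length_append, List.length_cons, List.length_nil] at *
    omega

lemma build_length (G : ℕ → Set (ℕ → ℕ)) (t : List ℕ) :
    t.length ≤ (build G t).length := by
  have := build_length_append G [] t
  simpa [build, buildRev] using this

lemma build_inj (G : ℕ → Set (ℕ → ℕ)) : Function.Injective (build G) := by
  intro s t h
  by_contra hne
  rcases meet_cases s t with hp | hp | ⟨a, b, s₁, t₁, hab, hs, ht⟩
  · obtain ⟨r, rfl⟩ := hp
    have hlen := build_length_append G s r
    rw [← h] at hlen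
    have : r.length = 0 := by omega
    exact hne (by simp [List.length_eq_zero_iff.mp this])
  · obtain ⟨r, rfl⟩ := hp
    have hlen := build_length_append G t r
    rw [h] at hlen
    have : r.length = 0 := by omega
    exact hne (by simp [List.length_eq_zero_iff.mp this])
  · set u := listMeet s t with hu
    have h1 : build G u ++ [a] <+: build G s := by
      have : u ++ [a] <+: s := ⟨s₁, by rw [hs]; simp⟩
      exact (build_cons_prefix G u a).trans (build_mono G this)
    have h2 : build G u ++ [b] <+: build G t := by
      have : u ++ [b] <+: t := ⟨t₁, by rw [ht]; simp⟩
      exact (build_cons_prefix G u b).trans (build_mono G this)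
    obtain ⟨rs, hrs⟩ := h1
    obtain ⟨rt, hrt⟩ := h2
    rw [← hrs, ← hrt, List.append_assoc, List.append_assoc] at h
    have := List.append_cancel_left h
    simp only [List.singleton_append, List.cons.injEq] at this
    exact hab this.1

lemma build_meet (G : ℕ → Set (ℕ → ℕ)) (s t : List ℕ) :
    build G (listMeet s t) = listMeet (build G s) (build G t) := by
  rcases meet_cases s t with hp | hp | ⟨a, b, s₁, t₁, hab, hs, ht⟩
  · rw [listMeet_of_prefix hp, listMeet_of_prefix (build_mono G hp)]
  · rw [listMeet_of_prefix' hp, listMeet_of_prefix' (build_mono G hp)]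
  · set u := listMeet s t with hu
    have h1 : build G u ++ [a] <+: build G s := by
      have : u ++ [a] <+: s := ⟨s₁, by rw [hs]; simp⟩
      exact (build_cons_prefix G u a).trans (build_mono G this)
    have h2 : build G u ++ [b] <+: build G t := by
      have : u ++ [b] <+: t := ⟨t₁, by rw [ht]; simp⟩
      exact (build_cons_prefix G u b).trans (build_mono G this)
    obtain ⟨rs, hrs⟩ := h1
    obtain ⟨rt, hrt⟩ := h2
    rw [← hrs, ← hrt, List.append_assoc, List.append_assoc, List.singleton_append,
      List.singleton_append, listMeet_append, listMeet_cons_ne hab, List.append_nil]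

/-! ### The induced map on Baire space -/

/-- The length-`i` initial segment of `b`. -/
def pfx (b : ℕ → ℕ) (i : ℕ) : List ℕ := List.ofFn (fun j : Fin i => b j)

lemma pfx_length (b : ℕ → ℕ) (i : ℕ) : (pfx b i).length = i := by simp [pfx]

lemma pfx_succ (b : ℕ → ℕ) (i : ℕ) : pfx b (i + 1) = pfx b i ++ [b i] := by
  rw [pfx, pfx, List.ofFn_succ']
  simp only [List.concat_eq_append, Fin.coe_castSucc, Fin.val_last]

lemma pfx_mono (b : ℕ → ℕ) {i j : ℕ} (h : i ≤ j) : pfx b i <+: pfx b j := by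
  induction j, h using Nat.le_induction with
  | base => exact List.prefix_rfl
  | succ j hj ih => exact ih.trans (by rw [pfx_succ]; exact List.prefix_append _ _)

lemma limSeq_apply (π : List ℕ → List ℕ) (b : ℕ → ℕ) (n : ℕ) :
    limSeq π b n = (π (pfx b (n + 1))).getD n 0 := rfl

lemma limSeq_eq (G : ℕ → Set (ℕ → ℕ)) (b : ℕ → ℕ) (n i : ℕ)
    (hi : n < (build G (pfx b i)).length) :
    limSeq (build G) b n = (build G (pfx b i)).getD n 0 := by
  rw [limSeq_apply]
  rcases le_total i (n + 1) with h | h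
  · exact getD_of_prefix (build_mono G (pfx_mono b h)) hi
  · have hn : n < (build G (pfx b (n + 1))).length := by
      have h1 := build_length G (pfx b (n + 1))
      rw [pfx_length] at h1
      omega
    exact (getD_of_prefix (build_mono G (pfx_mono b h)) hn).symm

lemma limSeq_mem_cyl (G : ℕ → Set (ℕ → ℕ)) (b : ℕ → ℕ) (i : ℕ) :
    limSeq (build G) b ∈ cylSet (build G (pfx b i)) :=
  fun n hn => limSeq_eq G b n i hn

lemma limSeq_mem (G : ℕ → Set (ℕ → ℕ)) (hG : ∀ k, IsOpen (G k) ∧ Dense (G k))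
    (b : ℕ → ℕ) (k : ℕ) : limSeq (build G) b ∈ G k := by
  have h1 := limSeq_mem_cyl G b (k + 1)
  rw [pfx_succ, build_append, pfx_length] at h1
  exact extFn_spec (hG k).1 (hG k).2 _ h1

lemma continuous_limSeq (π : List ℕ → List ℕ) : Continuous (limSeq π) := by
  refine continuous_pi fun n => ?_
  have h : (fun b => limSeq π b n) =
      (fun v : Fin (n + 1) → ℕ => (π (List.ofFn v)).getD n 0) ∘
        (fun (b : ℕ → ℕ) (i : Fin (n + 1)) => b i) := rfl
  rw [h]
  exact continuous_of_discreteTopology.comp (continuous_pi fun i => continuous_apply _)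

end Stmt9Aux

/-- stabilizing Baire measurable functions to continuous ones. -/
theorem stmt_9 {X : Type*} [TopologicalSpace X] [SecondCountableTopology X]
    (φ : (ℕ → ℕ) → X) (h : BaireMeasurableFun φ) :
    ∃ π : List ℕ → List ℕ, MeetEmbedding π ∧ Continuous (φ ∘ limSeq π) := by
  classical
  obtain ⟨B, hBc, -, hB⟩ := exists_countable_basis X
  obtain ⟨Vf, hVf⟩ := (hBc.insert ∅).exists_eq_range (Set.insert_nonempty _ _)
  have hVopen : ∀ n, IsOpen (Vf n) := by
    intro n
    have hmem : Vf n ∈ insert (∅ : Set X) B := hVf ▸ Set.mem_range_self n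
    rcases hmem with h | h
    · rw [h]; exact isOpen_empty
    · exact hB.isOpen h
  choose U hUopen hUmeagre using fun n => h (Vf n) (hVopen n)
  have hM : ∀ n, ∃ g : ℕ → Set (ℕ → ℕ), (∀ k, IsNowhereDense (g k)) ∧
      symmDiff (φ ⁻¹' Vf n) (U n) ⊆ ⋃ k, g k := by
    intro n
    obtain ⟨S, hS1, hS2, hS3⟩ :=
      isMeagre_iff_countable_union_isNowhereDense.mp (hUmeagre n)
    obtain ⟨g, hg⟩ := (hS2.insert ∅).exists_eq_range (Set.insert_nonempty _ _)
    refine ⟨g, fun k => ?_, hS3.trans ?_⟩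
    · have hmem : g k ∈ insert (∅ : Set (ℕ → ℕ)) S := hg ▸ Set.mem_range_self k
      rcases hmem with hk | hk
      · rw [hk]; exact isNowhereDense_empty
      · exact hS1 _ hk
    · rintro x ⟨s, hsS, hxs⟩
      have hmem : s ∈ insert (∅ : Set (ℕ → ℕ)) S := Set.mem_insert_of_mem _ hsS
      rw [hg] at hmem
      obtain ⟨k, rfl⟩ := hmem
      exact Set.mem_iUnion.mpr ⟨k, hxs⟩
  choose g hgND hgcov using hM
  set G : ℕ → Set (ℕ → ℕ) :=
    fun m => (closure (g m.unpair.1 m.unpair.2))ᶜ with hGdef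
  have hG : ∀ m, IsOpen (G m) ∧ Dense (G m) := fun m =>
    isClosed_isNowhereDense_iff_compl.mp ⟨isClosed_closure, (hgND _ _).closure⟩
  set π := build G with hπ
  have hmem : ∀ (b : ℕ → ℕ) (n : ℕ), limSeq π b ∉ symmDiff (φ ⁻¹' Vf n) (U n) := by
    intro b n hx
    obtain ⟨k, hk⟩ := Set.mem_iUnion.mp (hgcov n hx)
    have h1 : limSeq π b ∈ G (Nat.pair n k) := limSeq_mem G hG b _
    rw [hGdef] at h1
    simp only [Nat.unpair_pair] at h1
    exact h1 (subset_closure hk)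
  refine ⟨π, ⟨build_inj G, fun s t => build_meet G s t⟩, ?_⟩
  refine continuous_def.mpr fun V hV => ?_
  have key : (φ ∘ limSeq π) ⁻¹' V = ⋃ n, ⋃ (_ : Vf n ⊆ V), limSeq π ⁻¹' (U n) := by
    ext b
    simp only [Set.mem_preimage, Function.comp_apply, Set.mem_iUnion]
    constructor
    · intro hbV
      obtain ⟨W, hWB, hmemW, hWV⟩ := hB.exists_subset_of_mem_open hbV hV
      have hmem2 : W ∈ insert (∅ : Set X) B := Set.mem_insert_of_mem _ hWB
      rw [hVf] at hmem2
      obtain ⟨n, rfl⟩ := hmem2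
      refine ⟨n, hWV, ?_⟩
      by_contra hnU
      exact hmem b n (Set.mem_symmDiff.mpr (Or.inl ⟨hmemW, hnU⟩))
    · rintro ⟨n, hnV, hbU⟩
      refine hnV ?_
      by_contra h3
      exact hmem b n (Set.mem_symmDiff.mpr (Or.inr ⟨hbU, h3⟩))
  rw [key]
  exact isOpen_iUnion fun n => isOpen_iUnion fun _ =>
    (hUopen n).preimage (continuous_limSeq π)
end

section
/- Suppose that X is a metric space and φ : ℕ^ℕ → X is continuous. Then there is a ∧-embedding π : ℕ^{<ℕ} → ℕ^{<ℕ} such that the diameters diam(φ[{b ∈ ℕ^ℕ : π(t) ⊑ b}]) converge to 0, i.e. for every ε > 0, for all but finitely many t ∈ ℕ^{<ℕ} the set φ[{b ∈ ℕ^ℕ : π(t) ⊑ b}] has diameter less than ε. -/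
open Set Topology TopologicalSpace
open scoped ENNReal

namespace Stmt10Aux

open List

theorem listMeet_nil_left (t : List ℕ) : listMeet [] t = [] := by cases t <;> rfl

theorem listMeet_nil_right (s : List ℕ) : listMeet s [] = [] := by cases s <;> rfl

theorem listMeet_cons (a b : ℕ) (s t : List ℕ) :
    listMeet (a :: s) (b :: t) = if a = b then a :: listMeet s t else [] := rfl

theorem listMeet_self : ∀ s : List ℕ, listMeet s s = s
  | [] => rfl
  | a :: s => by rw [listMeet_cons, if_pos rfl, listMeet_self s]

theorem listMeet_prefix_left : ∀ s t : List ℕ, listMeet s t <+: s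
  | [], t => by rw [listMeet_nil_left]
  | a :: s, [] => by rw [listMeet_nil_right]; exact nil_prefix
  | a :: s, b :: t => by
    rw [listMeet_cons]
    split
    · exact List.cons_prefix_cons.mpr ⟨rfl, listMeet_prefix_left s t⟩
    · exact nil_prefix

theorem listMeet_prefix_right : ∀ s t : List ℕ, listMeet s t <+: t
  | [], t => by rw [listMeet_nil_left]; exact nil_prefix
  | a :: s, [] => by rw [listMeet_nil_right]
  | a :: s, b :: t => by
    rw [listMeet_cons]
    split
    · next hab => exact List.cons_prefix_cons.mpr ⟨hab, listMeet_prefix_right s t⟩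
    · exact nil_prefix

theorem le_listMeet : ∀ u s t : List ℕ, u <+: s → u <+: t → u <+: listMeet s t
  | [], _, _, _, _ => nil_prefix
  | c :: u, s, t, hs, ht => by
    obtain ⟨s₁, rfl⟩ := hs
    obtain ⟨t₁, rfl⟩ := ht
    simp only [cons_append, listMeet_cons, if_pos rfl]
    exact List.cons_prefix_cons.mpr
      ⟨rfl, le_listMeet u _ _ ((prefix_append u s₁)) ((prefix_append u t₁))⟩

theorem prefix_antisymm' {s t : List ℕ} (h1 : s <+: t) (h2 : t <+: s) : s = t :=
  h1.eq_of_length (le_antisymm h1.length_le h2.length_le)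

theorem listMeet_eq_left {s t : List ℕ} (h : s <+: t) : listMeet s t = s :=
  prefix_antisymm' (listMeet_prefix_left s t) (le_listMeet s s t prefix_rfl h)

theorem listMeet_comm : ∀ s t : List ℕ, listMeet s t = listMeet t s
  | [], t => by rw [listMeet_nil_left, listMeet_nil_right]
  | a :: s, [] => by rw [listMeet_nil_left, listMeet_nil_right]
  | a :: s, b :: t => by
    rw [listMeet_cons, listMeet_cons]
    by_cases hab : a = b
    · subst hab; rw [if_pos rfl, if_pos rfl, listMeet_comm s t]
    · rw [if_neg hab, if_neg (Ne.symm hab)]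

theorem listMeet_eq_right {s t : List ℕ} (h : t <+: s) : listMeet s t = t := by
  rw [listMeet_comm]; exact listMeet_eq_left h

theorem listMeet_cases : ∀ s t : List ℕ,
    s = listMeet s t ∨ t = listMeet s t ∨
      ∃ a b s' t', a ≠ b ∧ s = listMeet s t ++ a :: s' ∧ t = listMeet s t ++ b :: t'
  | [], t => Or.inl (by rw [listMeet_nil_left])
  | a :: s, [] => Or.inr (Or.inl (by rw [listMeet_nil_right]))
  | a :: s, b :: t => by
    by_cases hab : a = b
    · subst hab
      rw [listMeet_cons, if_pos rfl]
      rcases listMeet_cases s t with h | h | ⟨x, y, s', t', hxy, hs, ht⟩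
      · exact Or.inl (by rw [← h])
      · exact Or.inr (Or.inl (by rw [← h]))
      · refine Or.inr (Or.inr ⟨x, y, s', t', hxy, ?_, ?_⟩)
        · rw [cons_append, ← hs]
        · rw [cons_append, ← ht]
    · rw [listMeet_cons, if_neg hab]
      exact Or.inr (Or.inr ⟨a, b, s, t, hab, rfl, rfl⟩)

variable {X : Type*} [MetricSpace X]

theorem exists_good (φ : (ℕ → ℕ) → X) (h : Continuous φ) (s : List ℕ) {ε : ℝ≥0∞}
    (hε : 0 < ε) :
    ∃ s' : List ℕ, s <+: s' ∧ EMetric.diam (φ '' {b | PrefixFun s' b}) < ε := by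
  set ε' : ℝ≥0∞ := min ε 1 with hε'
  have hε'0 : ε' ≠ 0 := (lt_min hε zero_lt_one).ne'
  have hε'top : ε' ≠ ⊤ := ne_top_of_le_ne_top ENNReal.one_ne_top (min_le_right _ _)
  set η : ℝ≥0∞ := ε' / 2 with hη
  have hη0 : 0 < η / 2 := ENNReal.half_pos (ENNReal.half_pos hε'0).ne'
  set b₀ : ℕ → ℕ := fun i => s.getD i 0 with hb₀
  have hball : φ ⁻¹' Metric.eball (φ b₀) (η / 2) ∈ nhds b₀ :=
    h.continuousAt (Metric.eball_mem_nhds _ hη0)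
  rw [mem_nhds_iff] at hball
  obtain ⟨U, hUsub, hUopen, hbU⟩ := hball
  obtain ⟨V, ⟨x, n, rfl⟩, hbV, hVU⟩ :=
    (PiNat.isTopologicalBasis_cylinders (fun _ : ℕ => ℕ)).exists_subset_of_mem_open hbU hUopen
  set m : ℕ := max n s.length with hm
  refine ⟨List.ofFn (fun i : Fin m => b₀ i), ?_, ?_⟩
  · have htake : (List.ofFn (fun i : Fin m => b₀ i)).take s.length = s := by
      apply List.ext_getElem
      · simp [hm]
      · intro i h1 h2
        simp only [List.getElem_take, List.getElem_ofFn, hb₀]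
        exact List.getD_eq_getElem s 0 h2
    exact htake ▸ List.take_prefix _ _
  · have hmem : ∀ b : ℕ → ℕ, PrefixFun (List.ofFn (fun i : Fin m => b₀ i)) b →
        edist (φ b) (φ b₀) < η / 2 := by
      intro b hb
      have hbcyl : b ∈ φ ⁻¹' Metric.eball (φ b₀) (η / 2) := by
        apply hUsub; apply hVU
        intro i hi
        have him : i < m := lt_of_lt_of_le hi (le_max_left _ _)
        have h1 : b i = b₀ i := by
          have := hb i (by simpa using him)
          simpa using this.symm
        rw [h1]
        exact hbV i hi
      simpa [Metric.mem_eball] using hbcyl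
    have hdle : EMetric.diam (φ '' {b | PrefixFun (List.ofFn (fun i : Fin m => b₀ i)) b}) ≤ η := by
      apply EMetric.diam_le
      rintro _ ⟨b, hb, rfl⟩ _ ⟨b', hb', rfl⟩
      calc edist (φ b) (φ b') ≤ edist (φ b) (φ b₀) + edist (φ b') (φ b₀) :=
            edist_triangle_right _ _ _
        _ ≤ η / 2 + η / 2 := add_le_add (hmem b hb).le (hmem b' hb').le
        _ = η := ENNReal.add_halves η
    calc EMetric.diam _ ≤ η := hdle
      _ < ε' := ENNReal.half_lt_self hε'0 hε'top
      _ ≤ ε := min_le_left _ _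

theorem delta_pos (t : List ℕ) : (0 : ℝ≥0∞) < 2⁻¹ ^ Encodable.encode t :=
  ENNReal.pow_pos (ENNReal.inv_pos.mpr ENNReal.ofNat_ne_top) _

/-- One step of the construction: extend `s` to get diameter below `2⁻¹ ^ encode t`. -/
noncomputable def step (φ : (ℕ → ℕ) → X) (h : Continuous φ) (s t : List ℕ) : List ℕ :=
  (exists_good φ h s (delta_pos t)).choose

theorem step_prefix (φ : (ℕ → ℕ) → X) (h : Continuous φ) (s t : List ℕ) :
    s <+: step φ h s t :=
  (exists_good φ h s (delta_pos t)).choose_spec.1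

theorem step_diam (φ : (ℕ → ℕ) → X) (h : Continuous φ) (s t : List ℕ) :
    EMetric.diam (φ '' {b | PrefixFun (step φ h s t) b}) < 2⁻¹ ^ Encodable.encode t :=
  (exists_good φ h s (delta_pos t)).choose_spec.2

noncomputable def rho (φ : (ℕ → ℕ) → X) (h : Continuous φ) : List ℕ → List ℕ
  | [] => step φ h [] []
  | n :: l => step φ h (rho φ h l ++ [n]) ((n :: l).reverse)

noncomputable def piFn (φ : (ℕ → ℕ) → X) (h : Continuous φ) (t : List ℕ) : List ℕ :=
  rho φ h t.reverse

theorem piFn_nil (φ : (ℕ → ℕ) → X) (h : Continuous φ) : piFn φ h [] = step φ h [] [] := rfl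

theorem piFn_concat (φ : (ℕ → ℕ) → X) (h : Continuous φ) (t : List ℕ) (n : ℕ) :
    piFn φ h (t ++ [n]) = step φ h (piFn φ h t ++ [n]) (t ++ [n]) := by
  have h1 : (t ++ [n]).reverse = n :: t.reverse := by simp
  have h2 : (n :: t.reverse).reverse = t ++ [n] := by simp
  rw [piFn, h1, rho, h2, piFn]

theorem piFn_diam (φ : (ℕ → ℕ) → X) (h : Continuous φ) (t : List ℕ) :
    EMetric.diam (φ '' {b | PrefixFun (piFn φ h t) b}) < 2⁻¹ ^ Encodable.encode t := by
  rcases List.eq_nil_or_concat t with rfl | ⟨t', n, rfl⟩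
  · rw [piFn_nil]; exact step_diam φ h [] []
  · rw [List.concat_eq_append, piFn_concat]; exact step_diam φ h _ _

theorem concat_prefix_piFn (φ : (ℕ → ℕ) → X) (h : Continuous φ) (t : List ℕ) (n : ℕ) :
    piFn φ h t ++ [n] <+: piFn φ h (t ++ [n]) := by
  rw [piFn_concat]; exact step_prefix φ h _ _

theorem piFn_mono (φ : (ℕ → ℕ) → X) (h : Continuous φ) {s t : List ℕ} (hst : s <+: t) :
    piFn φ h s <+: piFn φ h t := by
  induction t using List.reverseRecOn with
  | nil => rw [List.prefix_nil] at hst; subst hst; exact prefix_rfl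
  | append_singleton t n ih =>
    rcases List.prefix_concat_iff.1 hst with rfl | hs'
    · exact prefix_rfl
    · exact (ih hs').trans ((List.prefix_append _ [n]).trans (concat_prefix_piFn φ h t n))

theorem piFn_length_lt (φ : (ℕ → ℕ) → X) (h : Continuous φ) {s t : List ℕ} (hst : s <+: t)
    (hne : s ≠ t) : (piFn φ h s).length < (piFn φ h t).length := by
  induction t using List.reverseRecOn with
  | nil => rw [List.prefix_nil] at hst; exact absurd hst hne
  | append_singleton t n ih =>
    rcases List.prefix_concat_iff.1 hst with rfl | hs'
    · exact absurd rfl hne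
    · have h2 : (piFn φ h t).length < (piFn φ h (t ++ [n])).length := by
        have := (concat_prefix_piFn φ h t n).length_le
        simp only [List.length_append, List.length_singleton] at this
        omega
      by_cases hst' : s = t
      · subst hst'; exact h2
      · exact lt_trans (ih hs' hst') h2

theorem piFn_meet (φ : (ℕ → ℕ) → X) (h : Continuous φ) (s t : List ℕ) :
    piFn φ h (listMeet s t) = listMeet (piFn φ h s) (piFn φ h t) := by
  have hms := listMeet_prefix_left s t
  have hmt := listMeet_prefix_right s t
  have h1 : piFn φ h (listMeet s t) <+: listMeet (piFn φ h s) (piFn φ h t) :=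
    le_listMeet _ _ _ (piFn_mono φ h hms) (piFn_mono φ h hmt)
  rcases listMeet_cases s t with hc | hc | ⟨a, b, s', t', hab, hs, ht⟩
  · rw [← hc]
    exact (listMeet_eq_left (piFn_mono φ h (hc ▸ hmt))).symm
  · rw [← hc]
    exact (listMeet_eq_right (piFn_mono φ h (hc ▸ hms))).symm
  · have has : listMeet s t ++ [a] <+: s := ⟨s', by rw [List.append_assoc, List.singleton_append]; exact hs.symm⟩
    have hat : listMeet s t ++ [b] <+: t := ⟨t', by rw [List.append_assoc, List.singleton_append]; exact ht.symm⟩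
    have h2 : piFn φ h (listMeet s t) ++ [a] <+: piFn φ h s :=
      (concat_prefix_piFn φ h _ a).trans (piFn_mono φ h has)
    have h3 : piFn φ h (listMeet s t) ++ [b] <+: piFn φ h t :=
      (concat_prefix_piFn φ h _ b).trans (piFn_mono φ h hat)
    have hMs := listMeet_prefix_left (piFn φ h s) (piFn φ h t)
    have hMt := listMeet_prefix_right (piFn φ h s) (piFn φ h t)
    have hπm : piFn φ h (listMeet s t) <+: piFn φ h s := piFn_mono φ h hms
    by_cases hlen : (listMeet (piFn φ h s) (piFn φ h t)).length ≤ (piFn φ h (listMeet s t)).length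
    · have h4 := List.prefix_of_prefix_length_le hMs hπm hlen
      exact (prefix_antisymm' h1 h4).symm ▸ rfl
    · exfalso
      push_neg at hlen
      have hlen' : (piFn φ h (listMeet s t) ++ [a]).length ≤
          (listMeet (piFn φ h s) (piFn φ h t)).length := by
        simp only [List.length_append, List.length_singleton]; omega
      have hlen'' : (piFn φ h (listMeet s t) ++ [b]).length ≤
          (listMeet (piFn φ h s) (piFn φ h t)).length := by
        simp only [List.length_append, List.length_singleton]; omega
      have ha' := List.prefix_of_prefix_length_le h2 hMs hlen'
      have hb' := List.prefix_of_prefix_length_le h3 hMt hlen''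
      have hab' := List.prefix_of_prefix_length_le ha' hb' (by simp)
      have : piFn φ h (listMeet s t) ++ [a] = piFn φ h (listMeet s t) ++ [b] :=
        hab'.eq_of_length (by simp)
      simp only [List.append_cancel_left_eq, List.cons.injEq] at this
      exact hab this.1

theorem piFn_inj (φ : (ℕ → ℕ) → X) (h : Continuous φ) : Function.Injective (piFn φ h) := by
  intro s t hst
  by_contra hne
  have hmm : piFn φ h (listMeet s t) = piFn φ h s := by
    rw [piFn_meet, hst, listMeet_self]
  rcases listMeet_cases s t with hc | hc | ⟨a, b, s', t', hab, hs, ht⟩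
  · have := piFn_length_lt φ h (hc ▸ listMeet_prefix_right s t) hne
    rw [hst] at this
    exact lt_irrefl _ this
  · have := piFn_length_lt φ h (hc ▸ listMeet_prefix_left s t) (Ne.symm hne)
    rw [hst] at this
    exact lt_irrefl _ this
  · have hne' : listMeet s t ≠ s := by
      intro heq
      have e1 : (listMeet s t).length = s.length := congrArg List.length heq
      have e2 := congrArg List.length hs
      simp only [List.length_append, List.length_cons] at e2
      omega
    have := piFn_length_lt φ h (listMeet_prefix_left s t) hne'
    rw [hmm] at this
    exact lt_irrefl _ this

end Stmt10Aux

/-- shrinking diameters of images of cylinders. -/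
theorem stmt_10 {X : Type*} [MetricSpace X] (φ : (ℕ → ℕ) → X) (h : Continuous φ) :
    ∃ π : List ℕ → List ℕ, MeetEmbedding π ∧
      ∀ ε : ℝ≥0∞, 0 < ε →
        {t : List ℕ | ¬ EMetric.diam (φ '' {b | PrefixFun (π t) b}) < ε}.Finite := by
  refine ⟨Stmt10Aux.piFn φ h, ⟨Stmt10Aux.piFn_inj φ h, fun s t => Stmt10Aux.piFn_meet φ h s t⟩, ?_⟩
  intro ε hε
  have htend : Filter.Tendsto (fun k : ℕ => (2⁻¹ : ℝ≥0∞) ^ k) Filter.atTop (nhds 0) :=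
    ENNReal.tendsto_pow_atTop_nhds_zero_of_lt_one (by simp [ENNReal.inv_lt_one])
  obtain ⟨N, hN⟩ := Filter.eventually_atTop.1 (htend.eventually_lt_const hε)
  have hfin : ({k : ℕ | ε < 2⁻¹ ^ k} : Set ℕ).Finite := by
    apply (Set.finite_Iio N).subset
    intro k hk
    by_contra hge
    simp only [Set.mem_Iio, not_lt] at hge
    exact absurd (hN k hge) (not_lt.mpr hk.le)
  apply (hfin.preimage (Encodable.encode_injective.injOn)).subset
  intro t ht
  simp only [Set.mem_preimage, Set.mem_setOf_eq] at ht ⊢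
  by_contra hle
  push_neg at hle
  exact ht (lt_of_lt_of_le (Stmt10Aux.piFn_diam φ h t) hle)
end

section
/- Suppose that X is a metric space and φ : ℕ^ℕ_* → X is a function whose restriction to ℕ^ℕ is continuous. Then there is a ∧-embedding π : ℕ^{<ℕ} → ℕ^{<ℕ} such that either the closure of (φ ∘ π̂)[ℕ^ℕ] is disjoint from the closure of (φ ∘ π̂)[ℕ^ℕ_* ∖ ℕ^ℕ], or φ ∘ π̂ : ℕ^ℕ_* → X is continuous at every point of ℕ^ℕ. -/
open Set Topology TopologicalSpace
open scoped ENNReal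

namespace Stmt13

theorem listMeet_nil_left (t : List ℕ) : listMeet [] t = [] := by cases t <;> rfl

theorem listMeet_of_prefix : ∀ {s t : List ℕ}, s <+: t → listMeet s t = s
  | [], t, _ => listMeet_nil_left t
  | a :: s, b :: t, h => by
    obtain ⟨rfl, h'⟩ := List.cons_prefix_cons.1 h
    simp [listMeet, listMeet_of_prefix h']

theorem listMeet_of_prefix' : ∀ {s t : List ℕ}, t <+: s → listMeet s t = t
  | s, [], _ => by cases s <;> rfl
  | a :: s, b :: t, h => by
    obtain ⟨rfl, h'⟩ := List.cons_prefix_cons.1 h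
    simp [listMeet, listMeet_of_prefix' h']
  | [], b :: t, h => by simp at h

theorem listMeet_diverge : ∀ (p : List ℕ) {u v : List ℕ} {a b : ℕ}, a ≠ b →
    p ++ [a] <+: u → p ++ [b] <+: v → listMeet u v = p
  | [], a' :: u, b' :: v, a, b, hab, hu, hv => by
    obtain ⟨rfl, _⟩ := List.cons_prefix_cons.1 hu
    obtain ⟨rfl, _⟩ := List.cons_prefix_cons.1 hv
    simp [listMeet, hab]
  | c :: p, u', v', a, b, hab, hu, hv => by
    rw [List.cons_append] at hu hv
    match u', v' with
    | c₁ :: u, c₂ :: v =>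
      obtain ⟨rfl, hu'⟩ := List.cons_prefix_cons.1 hu
      obtain ⟨rfl, hv'⟩ := List.cons_prefix_cons.1 hv
      simp [listMeet, listMeet_diverge p hab hu' hv']

theorem prefix_trichotomy : ∀ (s t : List ℕ), s <+: t ∨ t <+: s ∨
    ∃ p a b s' t', a ≠ b ∧ s = p ++ a :: s' ∧ t = p ++ b :: t' ∧ listMeet s t = p
  | [], t => Or.inl (List.nil_prefix)
  | s, [] => Or.inr (Or.inl (List.nil_prefix))
  | a :: s, b :: t => by
    by_cases hab : a = b
    · subst hab
      rcases prefix_trichotomy s t with h | h | ⟨p, x, y, s', t', hxy, rfl, rfl, hm⟩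
      · exact Or.inl (List.cons_prefix_cons.2 ⟨rfl, h⟩)
      · exact Or.inr (Or.inl (List.cons_prefix_cons.2 ⟨rfl, h⟩))
      · refine Or.inr (Or.inr ⟨a :: p, x, y, s', t', hxy, rfl, rfl, ?_⟩)
        simp [listMeet, hm]
    · exact Or.inr (Or.inr ⟨[], a, b, s, t, hab, rfl, rfl, by simp [listMeet, hab]⟩)

/-! ### segments -/

def seg (b : ℕ → ℕ) (m : ℕ) : List ℕ := List.ofFn fun i : Fin m => b i

theorem seg_succ (b : ℕ → ℕ) (m : ℕ) : seg b (m + 1) = seg b m ++ [b m] := by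
  rw [seg, List.ofFn_succ']
  simp [seg, List.concat_eq_append]

theorem seg_length (b : ℕ → ℕ) (m : ℕ) : (seg b m).length = m := by simp [seg]

theorem seg_prefix (b : ℕ → ℕ) {m m' : ℕ} (h : m ≤ m') : seg b m <+: seg b m' := by
  induction m' with
  | zero => have h0 : m = 0 := by omega
            subst h0; simp
  | succ n ih =>
    rcases Nat.lt_succ_iff_lt_or_eq.1 (Nat.lt_succ_of_le h) with h' | h'
    · refine (ih (by omega)).trans ?_
      rw [seg_succ]; exact List.prefix_append _ _
    · subst h'; exact List.prefix_refl _

theorem prefixFun_seg (b : ℕ → ℕ) (m : ℕ) : PrefixFun (seg b m) b := by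
  intro i h
  have h' : i < m := by simpa [seg_length] using h
  simp [seg, List.get_ofFn]

theorem prefixFun_mono {t t' : List ℕ} {b : ℕ → ℕ} (h : t <+: t') (h' : PrefixFun t' b) :
    PrefixFun t b := by
  intro i hi
  have hlen : i < t'.length := lt_of_lt_of_le hi h.length_le
  have := h' i hlen
  rw [← this]
  show t[i] = t'[i]
  exact h.getElem hi

theorem seg_eq_of_prefixFun {b b' : ℕ → ℕ} {n : ℕ} (h : PrefixFun (seg b n) b') :
    seg b' n = seg b n := by
  apply List.ext_getElem (by simp [seg_length])
  intro i h1 h2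
  have hi : i < n := by simpa [seg_length] using h1
  have := h i (by simpa [seg_length] using hi)
  simp [seg, List.get_ofFn] at this ⊢
  omega

/-! ### generic construction -/

variable (r : List ℕ) (c : List ℕ → ℕ → ℕ → List ℕ)

def build : List ℕ → ℕ → List ℕ → List ℕ
  | u, _, [] => u
  | u, n, k :: s => build (c u k n) (n + 1) s

def emb (s : List ℕ) : List ℕ := build c r 0 s

theorem build_append_last (k : ℕ) : ∀ (s : List ℕ) (u : List ℕ) (n : ℕ),
    build c u n (s ++ [k]) = c (build c u n s) k (n + s.length)
  | [], u, n => by simp [build]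
  | k' :: s, u, n => by
    show build c (c u k' n) (n+1) (s ++ [k]) = c (build c (c u k' n) (n+1) s) k (n + (s.length + 1))
    rw [build_append_last k s]
    congr 1
    omega

theorem emb_append_last (s : List ℕ) (k : ℕ) :
    emb r c (s ++ [k]) = c (emb r c s) k s.length := by
  show build c r 0 (s ++ [k]) = _
  rw [build_append_last]
  simp [emb]

variable (hc : ∀ u k n, u ++ [k] <+: c u k n)

include hc

theorem emb_step_prefix (s : List ℕ) (k : ℕ) : emb r c s ++ [k] <+: emb r c (s ++ [k]) := by
  rw [emb_append_last]; exact hc _ _ _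

theorem emb_mono : ∀ {s t : List ℕ}, s <+: t → emb r c s <+: emb r c t := by
  rintro s t ⟨w, rfl⟩
  induction w using List.reverseRecOn with
  | nil => simp
  | append_singleton w k ih =>
    refine ih.trans ?_
    rw [← List.append_assoc]
    exact ((emb r c (s ++ w)).prefix_append [k]).trans (emb_step_prefix r c hc _ k)

theorem emb_length (s : List ℕ) : s.length ≤ (emb r c s).length := by
  induction s using List.reverseRecOn with
  | nil => simp
  | append_singleton s k ih =>
    have := (emb_step_prefix r c hc s k).length_le
    simp only [List.length_append, List.length_cons] at *
    omega

theorem emb_strict {s : List ℕ} (k : ℕ) {t : List ℕ} (h : s ++ [k] <+: t) :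
    emb r c s ++ [k] <+: emb r c t :=
  (emb_step_prefix r c hc s k).trans (emb_mono r c hc h)

theorem emb_injective : Function.Injective (emb r c) := by
  intro s t hst
  rcases prefix_trichotomy s t with h | h | ⟨p, a, b, s', t', hab, rfl, rfl, _⟩
  · obtain ⟨w, rfl⟩ := h
    match w with
    | [] => simp
    | k :: w =>
      exfalso
      have h2 := (emb_strict r c hc k (⟨w, by simp⟩ : s ++ [k] <+: s ++ k :: w)).length_le
      rw [hst] at h2
      simp at h2
  · obtain ⟨w, rfl⟩ := h
    match w with
    | [] => simp
    | k :: w =>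
      exfalso
      have h2 := (emb_strict r c hc k (⟨w, by simp⟩ : t ++ [k] <+: t ++ k :: w)).length_le
      rw [← hst] at h2
      simp at h2
  · exfalso
    have ha := emb_strict r c hc a (⟨s', by simp⟩ : p ++ [a] <+: p ++ a :: s')
    have hb := emb_strict r c hc b (⟨t', by simp⟩ : p ++ [b] <+: p ++ b :: t')
    rw [hst] at ha
    set L := emb r c (p ++ b :: t')
    have hlen : (emb r c p).length < L.length := by
      have := hb.length_le; simp at this; omega
    have h1 : L[(emb r c p).length] = a := by
      rw [← ha.getElem (by simp)]
      exact List.getElem_concat_length rfl _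
    have h2 : L[(emb r c p).length] = b := by
      rw [← hb.getElem (by simp)]
      exact List.getElem_concat_length rfl _
    exact hab (h1 ▸ h2)

theorem emb_meet (s t : List ℕ) :
    emb r c (listMeet s t) = listMeet (emb r c s) (emb r c t) := by
  rcases prefix_trichotomy s t with h | h | ⟨p, a, b, s', t', hab, rfl, rfl, hm⟩
  · rw [listMeet_of_prefix h, listMeet_of_prefix (emb_mono r c hc h)]
  · rw [listMeet_of_prefix' h, listMeet_of_prefix' (emb_mono r c hc h)]
  · rw [hm, listMeet_diverge (emb r c p) hab
      (emb_strict r c hc a (⟨s', by simp⟩ : p ++ [a] <+: p ++ a :: s'))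
      (emb_strict r c hc b (⟨t', by simp⟩ : p ++ [b] <+: p ++ b :: t'))]

theorem emb_meetEmbedding : MeetEmbedding (emb r c) :=
  ⟨emb_injective r c hc, emb_meet r c hc⟩

theorem emb_prefixFun_limSeq (b : ℕ → ℕ) (m : ℕ) :
    PrefixFun (emb r c (seg b m)) (limSeq (emb r c) b) := by
  intro i h
  have hlen : i < (emb r c (seg b (i+1))).length :=
    lt_of_lt_of_le (Nat.lt_succ_self i)
      (le_trans (le_of_eq (seg_length b (i+1)).symm) (emb_length r c hc (seg b (i+1))))
  show (emb r c (seg b m)).get ⟨i, h⟩ = (emb r c (seg b (i+1))).getD i 0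
  rw [List.getD_eq_getElem _ _ hlen]
  rcases le_or_gt m (i+1) with hm | hm
  · have hp := emb_mono r c hc (seg_prefix b hm)
    show (emb r c (seg b m))[i] = _
    exact hp.getElem h
  · have hp := emb_mono r c hc (seg_prefix b (le_of_lt hm))
    show (emb r c (seg b m))[i] = _
    exact (hp.getElem hlen).symm


end Stmt13

namespace Stmt13

/-! ### topology helpers -/

def extF (t : List ℕ) : ℕ → ℕ := fun i => t.getD i 0

theorem seg_extF (t : List ℕ) : seg (extF t) t.length = t := by
  apply List.ext_getElem (by simp [seg_length])
  intro i h1 h2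
  have : (seg (extF t) t.length)[i] = extF t i := by
    simp [seg, List.getElem_ofFn]
  rw [this, extF, List.getD_eq_getElem t 0 h2]

theorem prefixFun_eq_iInter (t : List ℕ) : {b : ℕ → ℕ | PrefixFun t b} =
    ⋂ (i : Fin t.length), (fun b : ℕ → ℕ => b i.1) ⁻¹' {t.get i} := by
  ext b
  simp only [Set.mem_setOf_eq, Set.mem_iInter, Set.mem_preimage, Set.mem_singleton_iff]
  constructor
  · intro hb i
    exact (hb i.1 i.2).symm
  · intro hb i hi
    exact (hb ⟨i, hi⟩).symm

theorem isOpen_prefixFun (t : List ℕ) : IsOpen {b : ℕ → ℕ | PrefixFun t b} := by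
  rw [prefixFun_eq_iInter]
  exact isOpen_iInter_of_finite fun i =>
    (continuous_apply i.1).isOpen_preimage _ (isOpen_discrete _)

theorem isClosed_prefixFun (t : List ℕ) : IsClosed {b : ℕ → ℕ | PrefixFun t b} := by
  rw [prefixFun_eq_iInter]
  exact isClosed_iInter fun i => (isClosed_discrete _).preimage (continuous_apply i.1)

theorem isOpen_cyl (t : List ℕ) : IsOpen (NStar.cyl t) :=
  TopologicalSpace.isOpen_generateFrom_of_mem ⟨t, Or.inr (Or.inr (Or.inl rfl))⟩

theorem continuous_nstar_inf : Continuous (NStar.inf) := by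
  apply continuous_generateFrom_iff.mpr
  rintro S ⟨t, rfl | rfl | rfl | rfl⟩
  · convert isOpen_empty
    ext b
    simp only [Set.mem_preimage, Set.mem_singleton_iff, Set.mem_empty_iff_false, iff_false]
    intro hcon
    exact NStar.noConfusion hcon
  · have he : (NStar.inf) ⁻¹' ({NStar.fin t} : Set NStar)ᶜ = Set.univ := by
      ext b
      simp only [Set.mem_preimage, Set.mem_compl_iff, Set.mem_singleton_iff, Set.mem_univ,
        iff_true]
      exact fun hcon => NStar.noConfusion hcon
    rw [he]
    exact isOpen_univ
  · exact isOpen_prefixFun t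
  · rw [Set.preimage_compl]
    exact (isClosed_prefixFun t).isOpen_compl

theorem continuous_infPt : Continuous infPt :=
  Continuous.subtype_mk continuous_nstar_inf _

theorem modulus {X : Type*} [MetricSpace X] {g : (ℕ → ℕ) → X} (hg : Continuous g)
    (β : ℕ → ℕ) {ε : ℝ} (hε : 0 < ε) :
    ∃ N, ∀ β' : ℕ → ℕ, (∀ i < N, β' i = β i) → dist (g β') (g β) < ε := by
  have h1 : g ⁻¹' Metric.ball (g β) ε ∈ nhds β :=
    hg.continuousAt.preimage_mem_nhds (Metric.ball_mem_nhds _ hε)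
  rw [(PiNat.isTopologicalBasis_cylinders (fun _ : ℕ => ℕ)).mem_nhds_iff] at h1
  obtain ⟨S, ⟨x, n, rfl⟩, hβt, hts⟩ := h1
  refine ⟨n, fun β' hβ' => ?_⟩
  have hmem : β' ∈ PiNat.cylinder x n := fun i hi => by
    rw [hβ' i hi]; exact hβt i hi
  simpa [Metric.mem_ball] using hts hmem

/-! ### the separation case -/

theorem sep_case {X : Type*} [MetricSpace X] (f : List ℕ → X) (g : (ℕ → ℕ) → X)
    {ε : ℝ} {u0 : List ℕ}
    (H : ∀ w, u0 <+: w → ∃ v, w <+: v ∧ ∀ β, PrefixFun u0 β → ε ≤ dist (f v) (g β)) :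
    ∃ π : List ℕ → List ℕ, MeetEmbedding π ∧
      (∀ t β, PrefixFun u0 β → ε ≤ dist (f (π t)) (g β)) ∧
      (∀ b, PrefixFun u0 (limSeq π b)) := by
  classical
  set vch : List ℕ → List ℕ := fun w => if h : u0 <+: w then (H w h).choose else w with hvch
  have hvch1 : ∀ w, w <+: vch w := by
    intro w
    by_cases h : u0 <+: w
    · simp only [hvch, dif_pos h]; exact (H w h).choose_spec.1
    · simp only [hvch, dif_neg h]
      exact List.prefix_refl w
  have hvch2 : ∀ w, u0 <+: w → ∀ β, PrefixFun u0 β → ε ≤ dist (f (vch w)) (g β) := by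
    intro w h
    simp only [hvch, dif_pos h]
    exact (H w h).choose_spec.2
  set c : List ℕ → ℕ → ℕ → List ℕ := fun u k _ => vch (u ++ [k]) with hcdef
  have hc : ∀ u k n, u ++ [k] <+: c u k n := fun u k n => hvch1 _
  set r : List ℕ := vch u0 with hrdef
  refine ⟨emb r c, emb_meetEmbedding r c hc, ?_, ?_⟩
  · have hroot : u0 <+: emb r c [] := hvch1 u0
    intro t
    induction t using List.reverseRecOn with
    | nil => exact hvch2 u0 (List.prefix_refl u0)
    | append_singleton s k ih =>
      rw [emb_append_last]
      exact hvch2 _ ((hroot.trans (emb_mono r c hc s.nil_prefix)).trans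
        ((emb r c s).prefix_append [k]))
  · intro b
    have h0 : seg b 0 = [] := by simp [seg]
    have hu : u0 <+: emb r c (seg b 0) := by
      rw [h0]
      exact hvch1 u0
    exact prefixFun_mono hu (emb_prefixFun_limSeq r c hc b 0)

/-! ### the continuity case -/

theorem cont_case {X : Type*} [MetricSpace X] (f : List ℕ → X) (g : (ℕ → ℕ) → X)
    (hg : Continuous g)
    (H : ∀ ε : ℝ, 0 < ε → ∀ u0 : List ℕ, ∃ w, u0 <+: w ∧
      ∀ v, w <+: v → ∃ β, PrefixFun u0 β ∧ dist (f v) (g β) < ε) :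
    ∃ π : List ℕ → List ℕ, MeetEmbedding π ∧ (∀ s t, s <+: t → π s <+: π t) ∧
      ∃ x : List ℕ → X,
      (∀ s v, π s <+: v → dist (f v) (x s) < (2 : ℝ)⁻¹ ^ (s.length + 1)) ∧
      (∀ b n, dist (x (seg b n)) (g (limSeq π b)) ≤ 2 * (2 : ℝ)⁻¹ ^ n) := by
  classical
  have hhalf : (0 : ℝ) < 2⁻¹ := by norm_num
  -- the step choice
  have step : ∀ u : List ℕ, ∀ k n : ℕ, ∃ w, u ++ [k] <+: w ∧
      ∀ v, w <+: v → dist (f v) (g (extF (u ++ [k]))) < (2 : ℝ)⁻¹ ^ (n + 2) := by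
    intro u k n
    set β₀ := extF (u ++ [k]) with hβ₀
    obtain ⟨N, hN⟩ := modulus hg β₀ (pow_pos hhalf (n + 3))
    set N' := max N (u.length + 1) with hN'
    obtain ⟨w, hw1, hw2⟩ := H ((2 : ℝ)⁻¹ ^ (n + 3)) (pow_pos hhalf _) (seg β₀ N')
    refine ⟨w, ?_, ?_⟩
    · have h1 : seg β₀ (u.length + 1) = u ++ [k] := by
        have hl : (u ++ [k]).length = u.length + 1 := by simp
        rw [← hl, hβ₀]
        exact seg_extF (u ++ [k])
      rw [← h1]
      exact (seg_prefix β₀ (le_max_right _ _)).trans hw1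
    · intro v hv
      obtain ⟨β, hβ, hd⟩ := hw2 v hv
      have hag : ∀ i < N, β i = β₀ i := by
        intro i hi
        have hi' : i < (seg β₀ N').length := by
          rw [seg_length]; exact lt_of_lt_of_le hi (le_max_left _ _)
        have := hβ i hi'
        rw [← this]
        simp [seg, List.get_ofFn]
      have h2 := hN β hag
      have h3 : dist (f v) (g β₀) ≤ dist (f v) (g β) + dist (g β) (g β₀) := dist_triangle _ _ _
      have hps : (2 : ℝ)⁻¹ ^ (n + 3) + (2 : ℝ)⁻¹ ^ (n + 3) = (2 : ℝ)⁻¹ ^ (n + 2) := by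
        rw [pow_succ]; ring
      linarith
  choose c hc1 hc2 using step
  -- the root
  obtain ⟨r, -, hr⟩ : ∃ w, ([] : List ℕ) <+: w ∧
      ∀ v, w <+: v → dist (f v) (g (extF [])) < (2 : ℝ)⁻¹ ^ 1 := by
    obtain ⟨N, hN⟩ := modulus hg (extF []) (pow_pos hhalf 2)
    obtain ⟨w, hw1, hw2⟩ := H ((2 : ℝ)⁻¹ ^ 2) (pow_pos hhalf _) (seg (extF []) N)
    refine ⟨w, List.nil_prefix, fun v hv => ?_⟩
    obtain ⟨β, hβ, hd⟩ := hw2 v hv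
    have hag : ∀ i < N, β i = extF [] i := by
      intro i hi
      have hi' : i < (seg (extF []) N).length := by rw [seg_length]; exact hi
      have := hβ i hi'
      rw [← this]
      simp [seg, List.get_ofFn]
    have h2 := hN β hag
    have h3 : dist (f v) (g (extF [])) ≤ dist (f v) (g β) + dist (g β) (g (extF [])) :=
      dist_triangle _ _ _
    have hps : (2 : ℝ)⁻¹ ^ 2 + (2 : ℝ)⁻¹ ^ 2 = (2 : ℝ)⁻¹ ^ 1 := by norm_num
    linarith
  have hc : ∀ u k n, u ++ [k] <+: c u k n := hc1
  set π := emb r c with hπdef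
  set x : List ℕ → X := fun s =>
    if h : s = [] then g (extF []) else g (extF (π s.dropLast ++ [s.getLast h])) with hxdef
  have hx_nil : x [] = g (extF []) := by simp [hxdef]
  have hx_concat : ∀ s k, x (s ++ [k]) = g (extF (π s ++ [k])) := by
    intro s k
    have hne : s ++ [k] ≠ [] := by simp
    simp only [hxdef, dif_neg hne, List.dropLast_concat, List.getLast_concat]
  -- the fundamental estimate
  have hP : ∀ s v, π s <+: v → dist (f v) (x s) < (2 : ℝ)⁻¹ ^ (s.length + 1) := by
    intro s
    induction s using List.reverseRecOn with
    | nil =>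
      intro v hv
      rw [hx_nil]
      exact hr v hv
    | append_singleton s k ih =>
      intro v hv
      rw [hx_concat]
      have he : π (s ++ [k]) = c (π s) k s.length := emb_append_last r c s k
      have := hc2 (π s) k s.length v (by rw [← he]; exact hv)
      simpa [List.length_append] using this
  -- chain estimate
  have hchain : ∀ s k, dist (x s) (x (s ++ [k])) ≤ (2 : ℝ)⁻¹ ^ s.length := by
    intro s k
    have h1 := hP s (π (s ++ [k])) (emb_mono r c hc (s.prefix_append [k]))
    have h2 := hP (s ++ [k]) (π (s ++ [k])) (List.prefix_refl _)
    have h3 : dist (x s) (x (s ++ [k])) ≤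
        dist (f (π (s ++ [k]))) (x s) + dist (f (π (s ++ [k]))) (x (s ++ [k])) :=
      dist_triangle_left _ _ _
    have hl : (s ++ [k]).length = s.length + 1 := by simp
    rw [hl] at h2
    have e1 : (2 : ℝ)⁻¹ ^ (s.length + 1) = (2 : ℝ)⁻¹ ^ s.length * 2⁻¹ := pow_succ _ _
    have e2 : (2 : ℝ)⁻¹ ^ (s.length + 2) = (2 : ℝ)⁻¹ ^ s.length * 2⁻¹ * 2⁻¹ := by
      rw [pow_succ, pow_succ]
    have hpos : (0 : ℝ) < (2 : ℝ)⁻¹ ^ s.length := pow_pos hhalf _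
    nlinarith
  -- path estimate
  have hpath : ∀ rest s : List ℕ, dist (x s) (x (s ++ rest)) ≤ 2 * (2 : ℝ)⁻¹ ^ s.length := by
    intro rest
    induction rest with
    | nil =>
      intro s
      simp only [List.append_nil, dist_self]
      positivity
    | cons k rest ih =>
      intro s
      have h1 := hchain s k
      have h2 := ih (s ++ [k])
      have heq : (s ++ [k]) ++ rest = s ++ k :: rest := by simp
      rw [heq] at h2
      have hl : (s ++ [k]).length = s.length + 1 := by simp
      rw [hl] at h2
      have h3 : dist (x s) (x (s ++ k :: rest)) ≤
          dist (x s) (x (s ++ [k])) + dist (x (s ++ [k])) (x (s ++ k :: rest)) :=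
        dist_triangle _ _ _
      have e1 : (2 : ℝ)⁻¹ ^ (s.length + 1) = (2 : ℝ)⁻¹ ^ s.length * 2⁻¹ := pow_succ _ _
      nlinarith [pow_pos hhalf s.length]
  -- limit estimate
  have hlimit : ∀ b n, dist (x (seg b n)) (g (limSeq π b)) ≤ 2 * (2 : ℝ)⁻¹ ^ n := by
    intro b n
    apply le_of_forall_pos_le_add
    intro δ hδ
    obtain ⟨N, hN⟩ := modulus hg (limSeq π b) hδ
    have hsm : seg b (max n N + 1) = seg b (max n N) ++ [b (max n N)] := seg_succ b (max n N)
    have hxm : x (seg b (max n N + 1)) = g (extF (π (seg b (max n N)) ++ [b (max n N)])) := by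
      rw [hsm, hx_concat]
    have hpre : PrefixFun (π (seg b (max n N)) ++ [b (max n N)]) (limSeq π b) := by
      apply prefixFun_mono _ (emb_prefixFun_limSeq r c hc b (max n N + 1))
      rw [hsm]
      exact emb_step_prefix r c hc _ _
    have hlen1 : max n N ≤ (π (seg b (max n N))).length := by
      have h1 := emb_length r c hc (seg b (max n N))
      rwa [seg_length] at h1
    have hag : ∀ i < N, extF (π (seg b (max n N)) ++ [b (max n N)]) i = limSeq π b i := by
      intro i hi
      have hilen : i < (π (seg b (max n N)) ++ [b (max n N)]).length := by
        simp only [List.length_append, List.length_cons, List.length_nil]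
        omega
      have h1 := hpre i hilen
      rw [extF, List.getD_eq_getElem _ 0 hilen, ← h1]
      rfl
    have h2 := hN _ hag
    have h3 : dist (x (seg b n)) (g (limSeq π b)) ≤
        dist (x (seg b n)) (x (seg b (max n N + 1))) +
        dist (x (seg b (max n N + 1))) (g (limSeq π b)) := dist_triangle _ _ _
    obtain ⟨rest, hrest⟩ := seg_prefix b (show n ≤ max n N + 1 by omega)
    have h4 : dist (x (seg b n)) (x (seg b (max n N + 1))) ≤ 2 * (2 : ℝ)⁻¹ ^ n := by
      have hh := hpath rest (seg b n)
      rw [hrest, seg_length] at hh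
      exact hh
    rw [hxm] at h3 h4
    linarith
  exact ⟨π, emb_meetEmbedding r c hc, fun s t hst => emb_mono r c hc hst, x, hP, hlimit⟩

end Stmt13

/-- separation or continuity at points of `ℕ^ℕ`. -/
theorem stmt_13 {X : Type*} [MetricSpace X] (φ : NNStar → X)
    (h : ContinuousOn φ {c : NNStar | c.1.IsInf}) :
    ∃ π : List ℕ → List ℕ, MeetEmbedding π ∧
      (closure ((φ ∘ hatNN π) '' {c : NNStar | c.1.IsInf}) ∩
          closure ((φ ∘ hatNN π) '' {c : NNStar | c.1.IsLim}) = ∅ ∨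
        ∀ c : NNStar, c.1.IsInf → ContinuousAt (φ ∘ hatNN π) c) := by
  classical
  open Stmt13 in
  set f : List ℕ → X := fun t => φ (limPt t).toNN with hf
  set g : (ℕ → ℕ) → X := fun b => φ (infPt b) with hg'
  have hg : Continuous g := h.comp_continuous Stmt13.continuous_infPt (fun b => ⟨b, rfl⟩)
  by_cases hsep : ∃ ε : ℝ, 0 < ε ∧ ∃ u0 : List ℕ, ∀ w, u0 <+: w →
      ∃ v, w <+: v ∧ ∀ β, PrefixFun u0 β → ε ≤ dist (f v) (g β)
  · obtain ⟨ε, hε, u0, H⟩ := hsep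
    obtain ⟨π, hπ, hFar, hPre⟩ := Stmt13.sep_case f g H
    refine ⟨π, hπ, Or.inl ?_⟩
    apply Set.eq_empty_iff_forall_notMem.mpr
    rintro z ⟨hz1, hz2⟩
    rw [Metric.mem_closure_iff] at hz1 hz2
    obtain ⟨a, ha, hda⟩ := hz1 (ε / 2) (by linarith)
    obtain ⟨d, hd, hdd⟩ := hz2 (ε / 2) (by linarith)
    obtain ⟨c1, hc1, rfl⟩ := ha
    obtain ⟨c2, hc2, rfl⟩ := hd
    obtain ⟨cv1, hp1⟩ := c1
    obtain ⟨b, rfl⟩ : (NStar.IsInf cv1) := hc1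
    obtain ⟨cv2, hp2⟩ := c2
    obtain ⟨t, rfl⟩ : (NStar.IsLim cv2) := hc2
    have e1 : (φ ∘ hatNN π) ⟨NStar.inf b, hp1⟩ = g (limSeq π b) := rfl
    have e2 : (φ ∘ hatNN π) ⟨NStar.lim t, hp2⟩ = f (π t) := rfl
    rw [e1] at hda
    rw [e2] at hdd
    have hfar := hFar t (limSeq π b) (hPre b)
    have htri : dist (f (π t)) (g (limSeq π b)) ≤
        dist (f (π t)) z + dist z (g (limSeq π b)) := dist_triangle _ _ _
    rw [dist_comm] at hdd
    rw [dist_comm] at hda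
    rw [dist_comm z (g (limSeq π b))] at htri
    linarith
  · push_neg at hsep
    have H : ∀ ε : ℝ, 0 < ε → ∀ u0 : List ℕ, ∃ w, u0 <+: w ∧
        ∀ v, w <+: v → ∃ β, PrefixFun u0 β ∧ dist (f v) (g β) < ε := by
      intro ε hε u0
      obtain ⟨w, hw1, hw2⟩ := hsep ε hε u0
      exact ⟨w, hw1, hw2⟩
    obtain ⟨π, hπ, hmono, x, hP, hlimit⟩ := Stmt13.cont_case f g hg H
    refine ⟨π, hπ, Or.inr ?_⟩
    rintro ⟨cv, hcf⟩ hcinf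
    obtain ⟨b, rfl⟩ : NStar.IsInf cv := hcinf
    rw [ContinuousAt, Metric.tendsto_nhds]
    intro ε hε
    have hhalf : (0 : ℝ) < 2⁻¹ := by norm_num
    obtain ⟨n, hn⟩ := exists_pow_lt_of_lt_one (show (0:ℝ) < ε/4 by linarith)
      (show (2:ℝ)⁻¹ < 1 by norm_num)
    have hψc : (φ ∘ hatNN π) ⟨NStar.inf b, hcf⟩ = g (limSeq π b) := rfl
    rw [hψc]
    have hUopen : IsOpen (Subtype.val ⁻¹' NStar.cyl (Stmt13.seg b n) : Set NNStar) :=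
      (Stmt13.isOpen_cyl (Stmt13.seg b n)).preimage continuous_subtype_val
    have hUmem : (⟨NStar.inf b, hcf⟩ : NNStar) ∈
        (Subtype.val ⁻¹' NStar.cyl (Stmt13.seg b n) : Set NNStar) :=
      Stmt13.prefixFun_seg b n
    apply Filter.eventually_of_mem (hUopen.mem_nhds hUmem)
    rintro ⟨cv', hcf'⟩ hc'
    have hpow : (0 : ℝ) < (2:ℝ)⁻¹ ^ n := pow_pos hhalf n
    cases cv' with
    | fin t => exact absurd ⟨t, rfl⟩ hcf'
    | inf b' =>
      have hpf : PrefixFun (Stmt13.seg b n) b' := hc'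
      have e : (φ ∘ hatNN π) ⟨NStar.inf b', hcf'⟩ = g (limSeq π b') := rfl
      rw [e]
      have e1 : Stmt13.seg b' n = Stmt13.seg b n := Stmt13.seg_eq_of_prefixFun hpf
      have h1 := hlimit b' n
      have h2 := hlimit b n
      rw [e1] at h1
      have htri : dist (g (limSeq π b')) (g (limSeq π b)) ≤
          dist (g (limSeq π b')) (x (Stmt13.seg b n)) +
          dist (x (Stmt13.seg b n)) (g (limSeq π b)) := dist_triangle _ _ _
      rw [dist_comm (g (limSeq π b')) (x (Stmt13.seg b n))] at htri
      linarith
    | lim t =>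
      have hpf : Stmt13.seg b n <+: t := hc'
      have e : (φ ∘ hatNN π) ⟨NStar.lim t, hcf'⟩ = f (π t) := rfl
      rw [e]
      have h1 := hP (Stmt13.seg b n) (π t) (hmono _ _ hpf)
      rw [Stmt13.seg_length] at h1
      have h2 := hlimit b n
      have htri : dist (f (π t)) (g (limSeq π b)) ≤
          dist (f (π t)) (x (Stmt13.seg b n)) +
          dist (x (Stmt13.seg b n)) (g (limSeq π b)) := dist_triangle _ _ _
      have hps : (2:ℝ)⁻¹ ^ (n + 1) = (2:ℝ)⁻¹ ^ n * 2⁻¹ := pow_succ _ _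
      linarith
end

section
/- Suppose that X is a metric space and φ : ℕ^ℕ_* ∖ ℕ^ℕ → X. Then there is a ∧-embedding π : ℕ^{<ℕ} → ℕ^{<ℕ} such that either there is an ε > 0 for which φ ∘ π̂ is an injection into an ε-discrete subset of X, or the diameters diam((φ ∘ π̂)[N_t ∩ (ℕ^ℕ_* ∖ ℕ^ℕ)]) converge to 0 (i.e. for every ε > 0, for all but finitely many t ∈ ℕ^{<ℕ} this set has diameter less than ε). -/
open Set Topology TopologicalSpace
open scoped ENNReal

namespace S14

def encA : List ℕ → ℕ
  | [] => 0
  | m :: r => Nat.pair (encA r) m + 1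

def enc (t : List ℕ) : ℕ := encA t.reverse

lemma encA_inj : Function.Injective encA := by
  intro s t h
  induction s generalizing t with
  | nil =>
    cases t with
    | nil => rfl
    | cons b t => simp [encA] at h
  | cons a s ih =>
    cases t with
    | nil => simp [encA] at h
    | cons b t =>
      simp only [encA, add_left_inj] at h
      obtain ⟨h1, h2⟩ := Nat.pair_eq_pair.mp h
      rw [h2, ih h1]

lemma enc_inj : Function.Injective enc := by
  intro s t h
  have h2 := encA_inj h
  have := congrArg List.reverse h2
  simpa using this

lemma enc_snoc (u : List ℕ) (m : ℕ) : enc (u ++ [m]) = Nat.pair (enc u) m + 1 := by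
  simp [enc, encA]

lemma listMeet_of_prefix : ∀ {s t : List ℕ}, s <+: t → listMeet s t = s := by
  intro s
  induction s with
  | nil => intro t _; cases t <;> rfl
  | cons a s ih =>
    rintro t ⟨r, rfl⟩
    simp [listMeet, List.append_eq, ih ⟨r, rfl⟩]

lemma listMeet_of_prefix' : ∀ {s t : List ℕ}, t <+: s → listMeet s t = t := by
  intro s t h
  induction t generalizing s with
  | nil => obtain ⟨r, rfl⟩ := h; cases r <;> rfl
  | cons a t ih =>
    obtain ⟨r, rfl⟩ := h
    simp [listMeet, List.append_eq, ih ⟨r, rfl⟩]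

lemma listMeet_diverge : ∀ (u : List ℕ) {a b : ℕ} (x y : List ℕ), a ≠ b →
    listMeet (u ++ a :: x) (u ++ b :: y) = u := by
  intro u
  induction u with
  | nil => intro a b x y h; simp [listMeet, h]
  | cons c u ih => intro a b x y h; simp [listMeet, ih x y h]

lemma prefix_tricho : ∀ (s t : List ℕ), s <+: t ∨ t <+: s ∨
    ∃ u a b x y, a ≠ b ∧ s = u ++ a :: x ∧ t = u ++ b :: y := by
  intro s
  induction s with
  | nil => intro t; exact Or.inl (List.nil_prefix)
  | cons a s ih =>
    intro t
    cases t with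
    | nil => exact Or.inr (Or.inl (List.nil_prefix))
    | cons b t =>
      by_cases hab : a = b
      · subst hab
        rcases ih t with h | h | ⟨u, c, d, x, y, hcd, rfl, rfl⟩
        · exact Or.inl (List.cons_prefix_cons.mpr ⟨rfl, h⟩)
        · exact Or.inr (Or.inl (List.cons_prefix_cons.mpr ⟨rfl, h⟩))
        · exact Or.inr (Or.inr ⟨a :: u, c, d, x, y, hcd, rfl, rfl⟩)
      · exact Or.inr (Or.inr ⟨[], a, b, s, t, hab, rfl, rfl⟩)

lemma pi_mono {π : List ℕ → List ℕ}
    (h : ∀ u m, π u ++ [m] <+: π (u ++ [m])) :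
    ∀ {s t : List ℕ}, s <+: t → π s <+: π t := by
  intro s t hst
  obtain ⟨r, rfl⟩ := hst
  induction r using List.reverseRecOn with
  | nil => simpa using List.prefix_rfl
  | append_singleton r m ih =>
    have h2 := h (s ++ r) m
    rw [← List.append_assoc]
    exact ih.trans ((List.prefix_append _ _).trans h2)

lemma len_lt {π : List ℕ → List ℕ}
    (h : ∀ u m, π u ++ [m] <+: π (u ++ [m])) :
    ∀ s t, s <+: t → s ≠ t → (π s).length < (π t).length := by
  intro s t hst hne
  obtain ⟨r, rfl⟩ := hst
  cases r with
  | nil => simp at hne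
  | cons c r =>
    have h2 := ((h s c).trans (pi_mono h (⟨r, by simp⟩ : s ++ [c] <+: s ++ c :: r))).length_le
    simp at h2; omega

lemma meetEmbedding_of_snoc {π : List ℕ → List ℕ}
    (h : ∀ u m, π u ++ [m] <+: π (u ++ [m])) : MeetEmbedding π := by
  constructor
  · intro s t hst
    by_contra hne
    rcases prefix_tricho s t with h1 | h1 | ⟨u, a, b, x, y, hab, rfl, rfl⟩
    · have := len_lt h s t h1 hne
      rw [hst] at this; omega
    · have := len_lt h t s h1 (Ne.symm hne)
      rw [hst] at this; omega
    · obtain ⟨x', hx'⟩ := (h u a).trans (pi_mono h (⟨x, by simp⟩ : u ++ [a] <+: u ++ a :: x))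
      obtain ⟨y', hy'⟩ := (h u b).trans (pi_mono h (⟨y, by simp⟩ : u ++ [b] <+: u ++ b :: y))
      rw [← hx', ← hy'] at hst
      simp only [List.append_assoc, List.singleton_append] at hst
      have := List.append_cancel_left hst
      simp at this
      exact hab this.1
  · intro s t
    rcases prefix_tricho s t with hst | hts | ⟨u, a, b, x, y, hab, rfl, rfl⟩
    · rw [listMeet_of_prefix hst, listMeet_of_prefix (pi_mono h hst)]
    · rw [listMeet_of_prefix' hts, listMeet_of_prefix' (pi_mono h hts)]
    · rw [listMeet_diverge u x y hab]
      obtain ⟨x', hx'⟩ := (h u a).trans (pi_mono h (⟨x, by simp⟩ : u ++ [a] <+: u ++ a :: x))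
      obtain ⟨y', hy'⟩ := (h u b).trans (pi_mono h (⟨y, by simp⟩ : u ++ [b] <+: u ++ b :: y))
      rw [← hx', ← hy']
      simp only [List.append_assoc, List.singleton_append]
      exact (listMeet_diverge (π u) x' y' hab).symm


section Case2

variable {X : Type*} [MetricSpace X]

def DB (D : Set (List ℕ)) (v : List ℕ) : Prop := ∀ v', v <+: v' → ∃ w ∈ D, v' <+: w

lemma DB.mono_node {D : Set (List ℕ)} {v v' : List ℕ} (hD : DB D v) (h : v <+: v') :
    DB D v' := fun u hu => hD u (h.trans hu)

lemma pigeon (f : List ℕ → X) {D : Set (List ℕ)} {v : List ℕ} (hDB : DB D v)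
    (F : Finset X) {δ : ℝ}
    (hcov : ∀ w, v <+: w → ∃ x ∈ F, dist (f w) x < δ) :
    ∃ x ∈ F, ∃ v', v <+: v' ∧ DB {w | w ∈ D ∧ v' <+: w ∧ dist (f w) x < δ} v' := by
  by_contra hcon
  push_neg at hcon
  have key : ∀ L : List X,
      ∃ v', v <+: v' ∧ ∀ w, w ∈ D → v' <+: w → ∀ x ∈ L, x ∈ F → ¬ dist (f w) x < δ := by
    intro L
    induction L with
    | nil => exact ⟨v, List.prefix_rfl, fun w _ _ x hx _ => absurd hx List.not_mem_nil⟩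
    | cons x L ih =>
      obtain ⟨v₁, hv₁, hsep⟩ := ih
      by_cases hx : x ∈ F
      · have hnd := hcon x hx v₁ hv₁
        have hnd3 : ¬ ∀ v'', v₁ <+: v'' →
            ∃ w ∈ {w | w ∈ D ∧ v₁ <+: w ∧ dist (f w) x < δ}, v'' <+: w := hnd
        push_neg at hnd3
        obtain ⟨v₂, hv₂, hno⟩ := hnd3
        refine ⟨v₂, hv₁.trans hv₂, ?_⟩
        intro w hwD hw y hy hyF
        rcases List.mem_cons.mp hy with rfl | hy'
        · intro hdist
          exact hno w ⟨hwD, (hv₂.trans hw), hdist⟩ hw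
        · exact hsep w hwD (hv₂.trans hw) y hy' hyF
      · refine ⟨v₁, hv₁, ?_⟩
        intro w hwD hw y hy hyF
        rcases List.mem_cons.mp hy with rfl | hy'
        · exact absurd hyF hx
        · exact hsep w hwD hw y hy' hyF
  obtain ⟨v', hv', hsep⟩ := key F.toList
  obtain ⟨w, hwD, hw⟩ := hDB v' hv'
  obtain ⟨x, hxF, hdist⟩ := hcov w (hv'.trans hw)
  exact hsep w hwD hw x (Finset.mem_toList.mpr hxF) hxF hdist

def Good2 (f : List ℕ → X) (δ : ℝ) (q : List ℕ × Set (List ℕ)) (m : ℕ)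
    (p : List ℕ × Set (List ℕ)) : Prop :=
  p.1 ∈ p.2 ∧ DB p.2 p.1 ∧ p.2 ⊆ q.2 ∧ q.1 ++ [m] <+: p.1 ∧
    ∃ x, ∀ a ∈ p.2, dist (f a) x < δ

noncomputable def rad (n : ℕ) : ℝ := (1/2) ^ (n + 2)

lemma rad_pos (n : ℕ) : (0 : ℝ) < rad n := by unfold rad; positivity

abbrev HC (f : List ℕ → X) : Prop :=
  ∀ (v : List ℕ) (δ : ℝ), 0 < δ → ∃ v₁, v <+: v₁ ∧
    ∃ F : Finset X, ∀ w, v₁ <+: w → ∃ x ∈ F, dist (f w) x < δ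

lemma step2 (f : List ℕ → X) (Hc2 : HC f)
    {q : List ℕ × Set (List ℕ)} (hq : q.1 ∈ q.2 ∧ DB q.2 q.1)
    (m : ℕ) {δ : ℝ} (hδ : 0 < δ) : ∃ p, Good2 f δ q m p := by
  obtain ⟨v₁, hv₁, F, hcov⟩ := Hc2 (q.1 ++ [m]) δ hδ
  have hDB1 : DB q.2 v₁ := hq.2.mono_node ((List.prefix_append _ _).trans hv₁)
  obtain ⟨x, hxF, v', hv', hDB'⟩ := pigeon f hDB1 F hcov
  obtain ⟨w', hw', hvw'⟩ := hDB' v' List.prefix_rfl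
  refine ⟨(w', {w | w ∈ q.2 ∧ v' <+: w ∧ dist (f w) x < δ}), hw',
    hDB'.mono_node hw'.2.1, fun a ha => ha.1, hv₁.trans (hv'.trans hw'.2.1), x,
    fun a ha => ha.2.2⟩

lemma root2 (f : List ℕ → X) (Hc2 : HC f) {δ : ℝ} (hδ : 0 < δ) :
    ∃ p : List ℕ × Set (List ℕ), p.1 ∈ p.2 ∧ DB p.2 p.1 ∧
      ∃ x, ∀ a ∈ p.2, dist (f a) x < δ := by
  obtain ⟨v₁, _, F, hcov⟩ := Hc2 [] δ hδ
  have hDB1 : DB Set.univ v₁ := fun v' hv' => ⟨v', trivial, List.prefix_rfl⟩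
  obtain ⟨x, hxF, v', hv', hDB'⟩ := pigeon f hDB1 F hcov
  obtain ⟨w', hw', hvw'⟩ := hDB' v' List.prefix_rfl
  exact ⟨(w', {w | w ∈ Set.univ ∧ v' <+: w ∧ dist (f w) x < δ}), hw',
    hDB'.mono_node hw'.2.1, x, fun a ha => ha.2.2⟩

open scoped Classical in
noncomputable def step2aux (f : List ℕ → X) (Hc2 : HC f)
    (q : List ℕ × Set (List ℕ)) (m n : ℕ) : List ℕ × Set (List ℕ) :=
  if h : q.1 ∈ q.2 ∧ DB q.2 q.1 then (step2 f Hc2 h m (rad_pos n)).choose else q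

lemma step2aux_spec (f : List ℕ → X) (Hc2 : HC f)
    {q : List ℕ × Set (List ℕ)} (hq : q.1 ∈ q.2 ∧ DB q.2 q.1)
    (m n : ℕ) : Good2 f (rad n) q m (step2aux f Hc2 q m n) := by
  unfold step2aux
  rw [dif_pos hq]
  exact (step2 f Hc2 hq m (rad_pos n)).choose_spec

noncomputable def vals2 (f : List ℕ → X) (Hc2 : HC f) :
    ℕ → List (List ℕ × Set (List ℕ))
  | 0 => [(root2 f Hc2 (rad_pos 0)).choose]
  | (k+1) => vals2 f Hc2 k ++
      [step2aux f Hc2 ((vals2 f Hc2 k).getD (Nat.unpair k).1 ([], Set.univ))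
        (Nat.unpair k).2 (k+1)]

lemma vals2_len (f : List ℕ → X) (Hc2 : HC f) :
    ∀ k, (vals2 f Hc2 k).length = k + 1 := by
  intro k; induction k with
  | zero => rfl
  | succ k ih => simp [vals2, ih]

noncomputable def val2 (f : List ℕ → X) (Hc2 : HC f) (n : ℕ) :
    List ℕ × Set (List ℕ) :=
  (vals2 f Hc2 n).getD n ([], Set.univ)

lemma vals2_getD (f : List ℕ → X) (Hc2 : HC f) : ∀ {a k : ℕ}, a ≤ k →
    (vals2 f Hc2 k).getD a ([], Set.univ) = val2 f Hc2 a := by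
  intro a k h
  induction k with
  | zero => have : a = 0 := Nat.le_zero.mp h; subst this; rfl
  | succ k ih =>
    rcases Nat.lt_or_ge a (k+1) with h2 | h2
    · rw [vals2, List.getD_append _ _ _ _ (by rw [vals2_len]; exact h2)]
      exact ih (Nat.lt_succ_iff.mp h2)
    · have : a = k + 1 := le_antisymm h h2
      subst this; rfl

lemma val2_succ (f : List ℕ → X) (Hc2 : HC f) (k : ℕ) : val2 f Hc2 (k+1) =
    step2aux f Hc2 (val2 f Hc2 (Nat.unpair k).1) (Nat.unpair k).2 (k+1) := by
  have h1 : (vals2 f Hc2 (k+1)).getD (k+1) ([], Set.univ) =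
      step2aux f Hc2 ((vals2 f Hc2 k).getD (Nat.unpair k).1 ([], Set.univ))
        (Nat.unpair k).2 (k+1) := by
    rw [vals2, List.getD_append_right _ _ _ _ (by rw [vals2_len])]
    rw [vals2_len]
    simp
  rw [val2, h1, vals2_getD f Hc2 (Nat.unpair_left_le k)]

lemma inv2 (f : List ℕ → X) (Hc2 : HC f) :
    ∀ n, (val2 f Hc2 n).1 ∈ (val2 f Hc2 n).2 ∧
    DB (val2 f Hc2 n).2 (val2 f Hc2 n).1 ∧
    ∃ x, ∀ a ∈ (val2 f Hc2 n).2, dist (f a) x < rad n := by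
  intro n
  induction n using Nat.strong_induction_on with
  | _ n ih =>
    match n with
    | 0 =>
      have he : val2 f Hc2 0 = (root2 f Hc2 (rad_pos 0)).choose := rfl
      rw [he]
      exact (root2 f Hc2 (rad_pos 0)).choose_spec
    | (k+1) =>
      have hq := ih (Nat.unpair k).1 (Nat.lt_succ_of_le (Nat.unpair_left_le k))
      have hs := step2aux_spec f Hc2 ⟨hq.1, hq.2.1⟩ (Nat.unpair k).2 (k+1)
      rw [val2_succ]
      exact ⟨hs.1, hs.2.1, hs.2.2.2.2⟩

lemma inv2' (f : List ℕ → X) (Hc2 : HC f) (k : ℕ) :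
    Good2 f (rad (k+1)) (val2 f Hc2 (Nat.unpair k).1)
      (Nat.unpair k).2 (val2 f Hc2 (k+1)) := by
  have hq := inv2 f Hc2 (Nat.unpair k).1
  rw [val2_succ]
  exact step2aux_spec f Hc2 ⟨hq.1, hq.2.1⟩ (Nat.unpair k).2 (k+1)

noncomputable def pi2 (f : List ℕ → X) (Hc2 : HC f) (t : List ℕ) : List ℕ :=
  (val2 f Hc2 (enc t)).1

lemma pi2_snoc (f : List ℕ → X) (Hc2 : HC f) (u : List ℕ) (m : ℕ) :
    pi2 f Hc2 u ++ [m] <+: pi2 f Hc2 (u ++ [m]) := by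
  have h := (inv2' f Hc2 (Nat.pair (enc u) m)).2.2.2.1
  rw [Nat.unpair_pair] at h
  unfold pi2
  rw [enc_snoc]
  exact h

lemma D2_mono (f : List ℕ → X) (Hc2 : HC f) : ∀ {s t : List ℕ}, t <+: s →
    (val2 f Hc2 (enc s)).2 ⊆ (val2 f Hc2 (enc t)).2 := by
  intro s
  induction s using List.reverseRecOn with
  | nil => intro t h; rw [List.prefix_nil.mp h]
  | append_singleton l m ih =>
    intro t h
    rcases eq_or_ne t (l ++ [m]) with rfl | hne
    · exact subset_rfl
    · have hlen : t.length ≤ l.length := by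
        have h1 := h.length_le
        simp only [List.length_append, List.length_singleton] at h1
        rcases Nat.lt_or_ge t.length (l.length + 1) with h2 | h2
        · omega
        · exact absurd (h.eq_of_length (by simp only [List.length_append, List.length_singleton]; omega)) hne
      have htl : t <+: l := List.prefix_of_prefix_length_le h (List.prefix_append l [m]) hlen
      have h1 : (val2 f Hc2 (enc (l ++ [m]))).2 ⊆ (val2 f Hc2 (enc l)).2 := by
        have h2 := (inv2' f Hc2 (Nat.pair (enc l) m)).2.2.1
        rw [Nat.unpair_pair] at h2
        rw [enc_snoc]
        exact h2
      exact h1.trans (ih htl)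

lemma mem_D2 (f : List ℕ → X) (Hc2 : HC f) {s t : List ℕ} (h : t <+: s) :
    (val2 f Hc2 (enc s)).1 ∈ (val2 f Hc2 (enc t)).2 :=
  D2_mono f Hc2 h (inv2 f Hc2 (enc s)).1

open scoped ENNReal in
lemma rad_bound {k n : ℕ} (h : k ≤ n) :
    ENNReal.ofReal (2 * rad n) ≤ 2⁻¹ ^ k := by
  have h1 : 2 * rad n = (1/2 : ℝ) ^ (n + 1) := by
    rw [rad, pow_succ]; ring
  rw [h1]
  have h2 : ENNReal.ofReal ((1/2 : ℝ) ^ (n+1)) = (2⁻¹ : ℝ≥0∞) ^ (n+1) := by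
    rw [ENNReal.ofReal_pow (by norm_num)]
    congr 1
    rw [show (1/2 : ℝ) = (2 : ℝ)⁻¹ by norm_num,
      ENNReal.ofReal_inv_of_pos (by norm_num)]
    norm_num
  rw [h2]
  exact pow_le_pow_of_le_one zero_le (ENNReal.inv_le_one.mpr one_le_two) (by omega)

end Case2


section Case1

variable {X : Type*} [MetricSpace X]

abbrev HH (f : List ℕ → X) (ε : ℝ) (u₀ : List ℕ) : Prop :=
  ∀ v, u₀ <+: v → ∀ F : Finset X, ∃ w, v <+: w ∧ ∀ x ∈ F, ε ≤ dist (f w) x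

open scoped Classical in
noncomputable def step1 (f : List ℕ → X) (ε : ℝ) (u₀ : List ℕ) (H : HH f ε u₀)
    (F : Finset X) (v : List ℕ) : List ℕ :=
  if h : u₀ <+: v then (H v h F).choose else v

lemma step1_spec (f : List ℕ → X) (ε : ℝ) (u₀ : List ℕ) (H : HH f ε u₀)
    (F : Finset X) {v : List ℕ} (h : u₀ <+: v) :
    v <+: step1 f ε u₀ H F v ∧ ∀ x ∈ F, ε ≤ dist (f (step1 f ε u₀ H F v)) x := by
  unfold step1
  rw [dif_pos h]
  exact (H v h F).choose_spec

open scoped Classical in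
noncomputable def vals1 (f : List ℕ → X) (ε : ℝ) (u₀ : List ℕ) (H : HH f ε u₀) :
    ℕ → List (List ℕ)
  | 0 => [(H u₀ List.prefix_rfl ∅).choose]
  | (k+1) => vals1 f ε u₀ H k ++
      [step1 f ε u₀ H ((vals1 f ε u₀ H k).map f).toFinset
        (((vals1 f ε u₀ H k).getD (Nat.unpair k).1 u₀) ++ [(Nat.unpair k).2])]

lemma vals1_len (f : List ℕ → X) (ε : ℝ) (u₀ : List ℕ) (H : HH f ε u₀) :
    ∀ k, (vals1 f ε u₀ H k).length = k + 1 := by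
  intro k; induction k with
  | zero => rfl
  | succ k ih => simp [vals1, ih]

noncomputable def val1 (f : List ℕ → X) (ε : ℝ) (u₀ : List ℕ) (H : HH f ε u₀)
    (n : ℕ) : List ℕ :=
  (vals1 f ε u₀ H n).getD n u₀

lemma vals1_getD (f : List ℕ → X) (ε : ℝ) (u₀ : List ℕ) (H : HH f ε u₀) :
    ∀ {a k : ℕ}, a ≤ k → (vals1 f ε u₀ H k).getD a u₀ = val1 f ε u₀ H a := by
  intro a k h
  induction k with
  | zero => have : a = 0 := Nat.le_zero.mp h; subst this; rfl
  | succ k ih =>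
    rcases Nat.lt_or_ge a (k+1) with h2 | h2
    · rw [vals1, List.getD_append _ _ _ _ (by rw [vals1_len]; exact h2)]
      exact ih (Nat.lt_succ_iff.mp h2)
    · have : a = k + 1 := le_antisymm h h2
      subst this; rfl

open scoped Classical in
lemma val1_succ (f : List ℕ → X) (ε : ℝ) (u₀ : List ℕ) (H : HH f ε u₀) (k : ℕ) :
    val1 f ε u₀ H (k+1) =
    step1 f ε u₀ H ((vals1 f ε u₀ H k).map f).toFinset
      (val1 f ε u₀ H (Nat.unpair k).1 ++ [(Nat.unpair k).2]) := by
  have h1 : (vals1 f ε u₀ H (k+1)).getD (k+1) u₀ =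
      step1 f ε u₀ H ((vals1 f ε u₀ H k).map f).toFinset
        (((vals1 f ε u₀ H k).getD (Nat.unpair k).1 u₀) ++ [(Nat.unpair k).2]) := by
    rw [vals1, List.getD_append_right _ _ _ _ (by rw [vals1_len])]
    rw [vals1_len]
    simp
  rw [val1, h1, vals1_getD f ε u₀ H (Nat.unpair_left_le k)]

open scoped Classical in
lemma inv1 (f : List ℕ → X) (ε : ℝ) (u₀ : List ℕ) (H : HH f ε u₀) :
    ∀ n, u₀ <+: val1 f ε u₀ H n ∧
      ∀ j, j < n → ε ≤ dist (f (val1 f ε u₀ H n)) (f (val1 f ε u₀ H j)) := by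
  intro n
  induction n using Nat.strong_induction_on with
  | _ n ih =>
    match n with
    | 0 =>
      have he : val1 f ε u₀ H 0 = (H u₀ List.prefix_rfl ∅).choose := rfl
      rw [he]
      exact ⟨(H u₀ List.prefix_rfl ∅).choose_spec.1, fun j hj => absurd hj (by omega)⟩
    | (k+1) =>
      have ha := (ih (Nat.unpair k).1 (Nat.lt_succ_of_le (Nat.unpair_left_le k))).1
      have hpre : u₀ <+: val1 f ε u₀ H (Nat.unpair k).1 ++ [(Nat.unpair k).2] :=
        ha.trans (List.prefix_append _ _)
      have hs := step1_spec f ε u₀ H ((vals1 f ε u₀ H k).map f).toFinset hpre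
      rw [val1_succ]
      constructor
      · exact hpre.trans hs.1
      · intro j hj
        apply hs.2
        rw [List.mem_toFinset]
        apply List.mem_map_of_mem (f := f)
        have : val1 f ε u₀ H j = (vals1 f ε u₀ H k).getD j u₀ :=
          (vals1_getD f ε u₀ H (Nat.lt_succ_iff.mp hj)).symm
        rw [this, List.getD_eq_getElem _ _ (by rw [vals1_len]; omega)]
        exact List.getElem_mem _

noncomputable def pi1 (f : List ℕ → X) (ε : ℝ) (u₀ : List ℕ) (H : HH f ε u₀)
    (t : List ℕ) : List ℕ :=
  val1 f ε u₀ H (enc t)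

lemma pi1_snoc (f : List ℕ → X) (ε : ℝ) (u₀ : List ℕ) (H : HH f ε u₀)
    (u : List ℕ) (m : ℕ) :
    pi1 f ε u₀ H u ++ [m] <+: pi1 f ε u₀ H (u ++ [m]) := by
  unfold pi1
  rw [enc_snoc]
  have hval := val1_succ f ε u₀ H (Nat.pair (enc u) m)
  rw [Nat.unpair_pair] at hval
  rw [hval]
  have ha := (inv1 f ε u₀ H (enc u)).1
  exact (step1_spec f ε u₀ H _ (ha.trans (List.prefix_append _ _))).1

lemma sep1 (f : List ℕ → X) (ε : ℝ) (u₀ : List ℕ) (H : HH f ε u₀)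
    {s t : List ℕ} (h : s ≠ t) :
    ε ≤ dist (f (pi1 f ε u₀ H s)) (f (pi1 f ε u₀ H t)) := by
  have henc : enc s ≠ enc t := fun h2 => h (enc_inj h2)
  rcases Nat.lt_or_ge (enc s) (enc t) with h2 | h2
  · rw [dist_comm]
    exact (inv1 f ε u₀ H (enc t)).2 (enc s) h2
  · exact (inv1 f ε u₀ H (enc s)).2 (enc t) (by omega)

end Case1

end S14


lemma NLim_rep (c : NLim) : ∃ s : List ℕ, c = limPt s := by
  obtain ⟨c1, hc⟩ := c
  obtain ⟨t, rfl⟩ := hc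
  exact ⟨t, rfl⟩

/-- discreteness or shrinking diameters on `ℕ^ℕ_* ∖ ℕ^ℕ`. -/
theorem stmt_14 {X : Type*} [MetricSpace X] (φ : NLim → X) :
    ∃ π : List ℕ → List ℕ, MeetEmbedding π ∧
      ((∃ ε > (0 : ℝ), ∃ S : Set X,
          (∀ x ∈ S, ∀ y ∈ S, x ≠ y → ε ≤ dist x y) ∧
          Function.Injective (φ ∘ hatLim π) ∧ Set.range (φ ∘ hatLim π) ⊆ S) ∨
        ∀ ε : ℝ≥0∞, 0 < ε →
          {t : List ℕ |
            ¬ EMetric.diam ((φ ∘ hatLim π) '' {c : NLim | NStar.PrefixOf t c.1}) < ε}.Finite) := by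
  classical
  set f : List ℕ → X := fun t => φ (limPt t) with hf
  by_cases hcase : ∃ ε : ℝ, 0 < ε ∧ ∃ u₀ : List ℕ, ∀ v, u₀ <+: v →
      ∀ F : Finset X, ∃ w, v <+: w ∧ ∀ x ∈ F, ε ≤ dist (f w) x
  · obtain ⟨ε, hε, u₀, H⟩ := hcase
    refine ⟨S14.pi1 f ε u₀ H, S14.meetEmbedding_of_snoc (S14.pi1_snoc f ε u₀ H), Or.inl
      ⟨ε, hε, Set.range (φ ∘ hatLim (S14.pi1 f ε u₀ H)), ?_, ?_, subset_rfl⟩⟩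
    · rintro x ⟨c, rfl⟩ y ⟨c', rfl⟩ hxy
      obtain ⟨s, rfl⟩ := NLim_rep c
      obtain ⟨s', rfl⟩ := NLim_rep c'
      have hss : s ≠ s' := by rintro rfl; exact hxy rfl
      exact S14.sep1 f ε u₀ H hss
    · intro c c' hcc
      obtain ⟨s, rfl⟩ := NLim_rep c
      obtain ⟨s', rfl⟩ := NLim_rep c'
      rcases eq_or_ne s s' with rfl | hss
      · rfl
      · exfalso
        have h1 : ε ≤ dist ((φ ∘ hatLim (S14.pi1 f ε u₀ H)) (limPt s))
            ((φ ∘ hatLim (S14.pi1 f ε u₀ H)) (limPt s')) := S14.sep1 f ε u₀ H hss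
        rw [hcc, dist_self] at h1
        linarith
  · push_neg at hcase
    have Hc2 : S14.HC f := fun v δ hδ => hcase δ hδ v
    refine ⟨S14.pi2 f Hc2, S14.meetEmbedding_of_snoc (S14.pi2_snoc f Hc2), Or.inr ?_⟩
    intro ε hε
    obtain ⟨k, hk⟩ := ENNReal.exists_inv_two_pow_lt hε.ne'
    have key : ∀ t : List ℕ, k ≤ S14.enc t →
        EMetric.diam ((φ ∘ hatLim (S14.pi2 f Hc2)) '' {c : NLim | NStar.PrefixOf t c.1}) < ε := by
      intro t ht
      obtain ⟨x, hx⟩ := (S14.inv2 f Hc2 (S14.enc t)).2.2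
      have hd : EMetric.diam ((φ ∘ hatLim (S14.pi2 f Hc2)) '' {c : NLim | NStar.PrefixOf t c.1})
          ≤ ENNReal.ofReal (2 * S14.rad (S14.enc t)) := by
        apply EMetric.diam_le
        rintro a ⟨c, hc, rfl⟩ b ⟨c', hc', rfl⟩
        obtain ⟨s, rfl⟩ := NLim_rep c
        obtain ⟨s', rfl⟩ := NLim_rep c'
        have hs : t <+: s := hc
        have hs' : t <+: s' := hc'
        have h1 : dist (f (S14.pi2 f Hc2 s)) x < S14.rad (S14.enc t) :=
          hx _ (S14.mem_D2 f Hc2 hs)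
        have h2 : dist (f (S14.pi2 f Hc2 s')) x < S14.rad (S14.enc t) :=
          hx _ (S14.mem_D2 f Hc2 hs')
        show edist (f (S14.pi2 f Hc2 s)) (f (S14.pi2 f Hc2 s')) ≤ _
        rw [edist_dist]
        apply ENNReal.ofReal_le_ofReal
        calc dist (f (S14.pi2 f Hc2 s)) (f (S14.pi2 f Hc2 s'))
            ≤ dist (f (S14.pi2 f Hc2 s)) x + dist x (f (S14.pi2 f Hc2 s')) :=
              dist_triangle _ _ _
          _ ≤ 2 * S14.rad (S14.enc t) := by rw [dist_comm x]; linarith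
      exact lt_of_le_of_lt (hd.trans (S14.rad_bound ht)) hk
    apply Set.Finite.subset (Set.Finite.preimage S14.enc_inj.injOn (Set.finite_Iio k))
    intro t ht
    simp only [Set.mem_setOf_eq] at ht
    simp only [Set.mem_preimage, Set.mem_Iio]
    by_contra h2
    push_neg at h2
    exact ht (key t h2)
end

section
/- Suppose that X is an analytic metric space, φ : ℕ^ℕ_* ∖ ℕ^ℕ → X is injective, and x ∈ X. Then there is a ∧-embedding π : ℕ^{<ℕ} → ℕ^{<ℕ} such that x is not in the image of φ ∘ π̂ on ℕ^ℕ_* ∖ ℕ^ℕ. -/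
open Set Topology TopologicalSpace
open scoped ENNReal

/-- avoiding a point of an analytic metric space. -/
theorem stmt_15 {X : Type*} [MetricSpace X] (hX : IsAnalytic X) (φ : NLim → X)
    (hφ : Function.Injective φ) (x : X) :
        ∃ π : List ℕ → List ℕ, MeetEmbedding π ∧ x ∉ Set.range (φ ∘ hatLim π) := by
  classical
  by_cases hx : ∃ c : NLim, φ c = x
  · obtain ⟨c₀, hc₀⟩ := hx
    obtain ⟨c, t₀, hct⟩ := c₀
    set a := t₀.headI + 1 with ha
    refine ⟨fun t => a :: t, ⟨fun s t h => by simpa using h, fun s t => by simp [listMeet]⟩, ?_⟩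
    rintro ⟨⟨c', ⟨t, rfl⟩⟩, hc⟩
    have : φ ⟨NStar.lim (a :: t), ⟨a :: t, rfl⟩⟩ = φ ⟨c, ⟨t₀, hct⟩⟩ := by
      simpa [hatLim, NStar.hat, hc₀] using hc
    have h2 : NStar.lim (a :: t) = c := congrArg Subtype.val (hφ this)
    rw [hct] at h2
    have h3 : a :: t = t₀ := by injection h2
    have : t₀.headI = a := by rw [← h3]; rfl
    omega
  · refine ⟨id, ⟨fun s t h => h, fun s t => rfl⟩, ?_⟩
    rintro ⟨c, hc⟩
    exact hx ⟨hatLim id c, hc⟩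
end
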